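/- arXiv:2506.05846 — 8 statements merged into one kernel-verified Lean document; each statement's English description precedes it below -/
import Mathlib

section
/- Let n ≥ 1 and ξ ∈ ℝ^{n+1} with 0 < |ξ| < 1. Then φ_{−ξ}(φ_ξ(p)) = p for every p ∈ S^n; consequently φ_ξ : S^n → S^n is a bijection with inverse φ_{−ξ}. -/
open MeasureTheory Real
open scoped RealInnerProductSpace

noncomputable section

/-- `f : ℝ² → ℝ` is `Γ(a,b)`-periodic: invariant under the lattice `ℤ(1,0) ⊕ ℤ(a,b)`. -/
def LatticePeriodic (a b : ℝ) (f : ℝ × ℝ → ℝ) : Prop :=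
  ∀ x y : ℝ, f (x + 1, y) = f (x, y) ∧ f (x + a, y + b) = f (x, y)

/-- The fundamental domain `[0,1] × [0,b]` of the lattice `Γ(a,b)`. -/
def rect (b : ℝ) : Set (ℝ × ℝ) := Set.Icc (0 : ℝ) 1 ×ˢ Set.Icc (0 : ℝ) b

/-- `|∇f|²` for `f : ℝ² → ℝ`. -/
def gradSq (f : ℝ × ℝ → ℝ) (p : ℝ × ℝ) : ℝ :=
  (fderiv ℝ f p (1, 0)) ^ 2 + (fderiv ℝ f p (0, 1)) ^ 2

/-- Rayleigh quotient of `f` for the conformal metric `ω · g_flat` on `T_{a,b}`. -/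
def rayleigh (b : ℝ) (ω f : ℝ × ℝ → ℝ) : ℝ :=
  (∫ p in rect b, gradSq f p) / (∫ p in rect b, (f p) ^ 2 * ω p)

/-- Min-max characterization of the second nonzero Laplace eigenvalue of the metric
`ω · g_flat` on the torus `T_{a,b}`: the infimum over all 3-dimensional subspaces `V`
of the space of smooth `Γ(a,b)`-periodic functions of the supremum of the Rayleigh
quotient over nonzero members of `V`. -/
def lambda2 (a b : ℝ) (ω : ℝ × ℝ → ℝ) : ℝ :=
  sInf { L : ℝ | ∃ V : Submodule ℝ (ℝ × ℝ → ℝ),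
    Module.finrank ℝ V = 3 ∧
    (∀ f ∈ V, ContDiff ℝ (⊤ : ℕ∞) f ∧ LatticePeriodic a b f) ∧
    L = sSup { R : ℝ | ∃ f ∈ V, f ≠ (0 : ℝ × ℝ → ℝ) ∧ R = rayleigh b ω f } }

/-- The moduli space 𝓜 of flat tori. -/
def moduli : Set (ℝ × ℝ) := { p | 0 ≤ p.1 ∧ p.1 ≤ 1 / 2 ∧ Real.sqrt (1 - p.1 ^ 2) ≤ p.2 }

/-- `S = √((a²+b²)(8+a²+b²))`. -/
def Sab (a b : ℝ) : ℝ := Real.sqrt ((a ^ 2 + b ^ 2) * (8 + a ^ 2 + b ^ 2))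

/-- The upper bound `U(a,b)` of the main theorem. -/
def Uab (a b : ℝ) : ℝ :=
  (16 * π ^ 2 / (3 * Real.sqrt 6 * b)) *
    (Real.sqrt (2 + a ^ 2 + b ^ 2 + Sab a b) / (a ^ 2 + b ^ 2 + Sab a b)) *
    (3 * (a ^ 2 + b ^ 2) + Sab a b)

open Classical in
/-- The conformal transformation `φ_ξ` of the unit sphere, `φ_0 = id`. -/
def phiMap {E : Type*} [NormedAddCommGroup E] [InnerProductSpace ℝ E] (ξ p : E) : E :=
  if ξ = 0 then p
  else
    ((Real.sqrt (1 - ‖ξ‖ ^ 2))⁻¹ * (⟪p, ξ⟫ + 1))⁻¹ •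
      (p + ((((Real.sqrt (1 - ‖ξ‖ ^ 2))⁻¹ - 1) / ‖ξ‖ ^ 2) * ⟪p, ξ⟫
              + (Real.sqrt (1 - ‖ξ‖ ^ 2))⁻¹) • ξ)

/-- The Dirichlet energy `E(F) = (1/2)∫_{[0,1]×[0,b]} Σᵢ |∇Fᵢ|²` of a map
`F : ℝ² → ℝ^ι` over a fundamental domain of `Γ(a,b)`. -/
def energy {ι : Type*} [Fintype ι] (b : ℝ) (F : ℝ × ℝ → EuclideanSpace ℝ ι) : ℝ :=
  (1 / 2) * ∫ p in rect b, ∑ i,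
    ((fderiv ℝ (fun q => F q i) p (1, 0)) ^ 2 + (fderiv ℝ (fun q => F q i) p (0, 1)) ^ 2)

/-- The embedding `Ψ_{a,b,r} : ℝ² → S³ ⊂ ℝ⁴`. -/
def Psi (a b r : ℝ) (p : ℝ × ℝ) : EuclideanSpace ℝ (Fin 4) :=
  (WithLp.equiv 2 (Fin 4 → ℝ)).symm
    ![Real.sqrt r * Real.cos (2 * π * p.2 / b),
      Real.sqrt r * Real.sin (2 * π * p.2 / b),
      Real.sqrt (1 - r) * Real.cos (2 * π * (p.1 - a * p.2 / b)),
      Real.sqrt (1 - r) * Real.sin (2 * π * (p.1 - a * p.2 / b))]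

/-- Membership in the lattice `Γ(a,b) = ℤ(1,0) ⊕ ℤ(a,b)`. -/
def inLattice (a b : ℝ) (v : ℝ × ℝ) : Prop :=
  ∃ m n : ℤ, v = ((m : ℝ) + (n : ℝ) * a, (n : ℝ) * b)

/-- The eigenfunction `f^{a,b}_{pq}(x,y) = cos(2π(qx + ((p−qa)/b)y))` of the flat torus. -/
def eigenC (a b : ℝ) (p q : ℤ) (x y : ℝ) : ℝ :=
  Real.cos (2 * π * ((q : ℝ) * x + ((p : ℝ) - (q : ℝ) * a) / b * y))

/-- The eigenfunction `g^{a,b}_{pq}(x,y) = sin(2π(qx + ((p−qa)/b)y))` of the flat torus. -/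
def eigenS (a b : ℝ) (p q : ℤ) (x y : ℝ) : ℝ :=
  Real.sin (2 * π * ((q : ℝ) * x + ((p : ℝ) - (q : ℝ) * a) / b * y))

/-- Bryant's conformal immersion `ψ_{a,b} : T_{a,b} → S⁵ ⊂ ℝ⁶`. -/
def psiBryant (a b : ℝ) (p : ℝ × ℝ) : EuclideanSpace ℝ (Fin 6) :=
  (WithLp.equiv 2 (Fin 6 → ℝ)).symm
    ((1 / Real.sqrt (1 + b ^ 2 + a ^ 2 - a)) •
      ![Real.sqrt (b ^ 2 + a ^ 2 - a) * eigenC a b 1 0 p.1 p.2,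
        Real.sqrt (b ^ 2 + a ^ 2 - a) * eigenS a b 1 0 p.1 p.2,
        Real.sqrt (1 - a) * eigenC a b 0 1 p.1 p.2,
        Real.sqrt (1 - a) * eigenS a b 0 1 p.1 p.2,
        Real.sqrt a * eigenC a b 1 1 p.1 p.2,
        Real.sqrt a * eigenS a b 1 1 p.1 p.2])

open Classical in
/-- The map `F_{a,b} = (A₁ f_{p₁q₁}, A₁ g_{p₁q₁}, …, Aₙ f_{pₙqₙ}, Aₙ g_{pₙqₙ})`
of El Soufi–Ilias–Ros, with values in `ℝ^{2n}` indexed by `Fin n × Fin 2`. -/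
def Ftorus (n : ℕ) (A : Fin n → ℝ) (pq : Fin n → ℤ × ℤ) (a b : ℝ) (z : ℝ × ℝ) :
    EuclideanSpace ℝ (Fin n × Fin 2) :=
  (WithLp.equiv 2 (Fin n × Fin 2 → ℝ)).symm
    (fun j => if j.2 = 0 then A j.1 * eigenC a b (pq j.1).1 (pq j.1).2 z.1 z.2
              else A j.1 * eigenS a b (pq j.1).1 (pq j.1).2 z.1 z.2)



lemma phiMap_key {E : Type*} [NormedAddCommGroup E] [InnerProductSpace ℝ E]
    {ξ : E} (hξ : ξ ≠ 0) (h1 : ‖ξ‖ < 1) {p : E} (hp : ‖p‖ = 1) :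
    ‖phiMap ξ p‖ = 1 ∧ phiMap (-ξ) (phiMap ξ p) = p := by
  have hξn : 0 < ‖ξ‖ := norm_pos_iff.mpr hξ
  set t : ℝ := ‖ξ‖ ^ 2 with ht
  have ht0 : 0 < t := by positivity
  have ht1 : t < 1 := by nlinarith
  set α : ℝ := (Real.sqrt (1 - t))⁻¹ with hαdef
  have hsqrt : 0 < Real.sqrt (1 - t) := Real.sqrt_pos.mpr (by linarith)
  have hα0 : 0 < α := inv_pos.mpr hsqrt
  have hα2 : α ^ 2 * (1 - t) = 1 := by
    rw [hαdef, inv_pow, Real.sq_sqrt (by linarith : (0:ℝ) ≤ 1 - t)]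
    exact inv_mul_cancel₀ (by linarith)
  set s : ℝ := ⟪p, ξ⟫ with hsdef
  have hs : |s| < 1 := by
    have h := abs_real_inner_le_norm p ξ
    rw [hp, one_mul] at h
    exact lt_of_le_of_lt h h1
  have hs1 : 0 < s + 1 := by have := abs_lt.mp hs; linarith [this.1]
  set β : ℝ := (α - 1) / t with hβdef
  have hβt : β * t = α - 1 := div_mul_cancel₀ _ ht0.ne'
  have hβa : β * (α + 1) = α ^ 2 := by
    have h : β * (α + 1) * t = α ^ 2 * t := by
      linear_combination (α + 1) * hβt + hα2
    exact mul_right_cancel₀ ht0.ne' h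
  set μ : ℝ := β * s + α with hμdef
  set c : ℝ := (α * (s + 1))⁻¹ with hcdef
  have hcs : 0 < α * (s + 1) := mul_pos hα0 hs1
  have hc' : c * (α * (s + 1)) = 1 := by rw [hcdef]; exact inv_mul_cancel₀ hcs.ne'
  have hq : phiMap ξ p = c • (p + μ • ξ) := by
    rw [phiMap, if_neg hξ, ← ht, ← hαdef, ← hsdef, ← hβdef, ← hμdef, ← hcdef]
  have hnorm2 : ‖p + μ • ξ‖ ^ 2 = (α * (s + 1)) ^ 2 := by
    rw [norm_add_sq_real, real_inner_smul_right, hp, norm_smul, mul_pow,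
      Real.norm_eq_abs, sq_abs, ← ht, ← hsdef]
    linear_combination (β * s ^ 2 + 2 * α * s) * hβt + s ^ 2 * hβa - hα2
  have hnorm : ‖p + μ • ξ‖ = α * (s + 1) := by
    rw [← Real.sqrt_sq (norm_nonneg _), hnorm2, Real.sqrt_sq hcs.le]
  have hqnorm : ‖phiMap ξ p‖ = 1 := by
    rw [hq, norm_smul, hnorm, Real.norm_eq_abs, hcdef, abs_inv, abs_of_pos hcs,
      inv_mul_cancel₀ hcs.ne']
  refine ⟨hqnorm, ?_⟩
  have hξ' : (-ξ : E) ≠ 0 := neg_ne_zero.mpr hξ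
  have hs' : ⟪phiMap ξ p, -ξ⟫ = -(c * (s + μ * t)) := by
    rw [hq, inner_neg_right, real_inner_smul_left, inner_add_left,
      real_inner_smul_left, real_inner_self_eq_norm_sq, ← ht, ← hsdef]
  have hAmul : (α * (-(c * (s + μ * t)) + 1)) * (α * (s + 1)) = 1 := by
    linear_combination (-(α * (s + μ * t))) * hc' + (-(α * s)) * hβt + hα2
  have hA : α * (-(c * (s + μ * t)) + 1) = c := by
    rw [hcdef]; exact eq_inv_of_mul_eq_one_left hAmul
  have hq' : phiMap (-ξ) (phiMap ξ p) =
      (α * (s + 1)) • (phiMap ξ p + (β * (-(c * (s + μ * t))) + α) • (-ξ)) := by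
    rw [phiMap, if_neg hξ', norm_neg, ← ht, ← hαdef, hs', ← hβdef, hA, hcdef, inv_inv]
  have hB : c * μ = β * (-(c * (s + μ * t))) + α := by
    linear_combination c * ((β * s + α) * hβt + s * hβa) + α * hc'
  rw [hq', hq]
  have hexp : (α * (s + 1)) • ((c • (p + μ • ξ)) + (β * (-(c * (s + μ * t))) + α) • (-ξ))
      = (α * (s + 1) * c) • p
        + (α * (s + 1) * (c * μ - (β * (-(c * (s + μ * t))) + α))) • ξ := by
    module
  rw [hexp, hB]
  simp only [sub_self, mul_zero, zero_smul, add_zero]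
  rw [mul_comm (α * (s+1)) c, hc', one_smul]

/-- `φ_{−ξ} ∘ φ_ξ = id` on `Sⁿ`; consequently `φ_ξ : Sⁿ → Sⁿ` is a
bijection with inverse `φ_{−ξ}`. -/
theorem phiMap_inverse (n : ℕ) (hn : 1 ≤ n)
    (ξ : EuclideanSpace ℝ (Fin (n + 1))) (h0 : 0 < ‖ξ‖) (h1 : ‖ξ‖ < 1) :
    (∀ p ∈ Metric.sphere (0 : EuclideanSpace ℝ (Fin (n + 1))) 1,
        phiMap (-ξ) (phiMap ξ p) = p) ∧
    Set.BijOn (phiMap ξ) (Metric.sphere (0 : EuclideanSpace ℝ (Fin (n + 1))) 1)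
      (Metric.sphere (0 : EuclideanSpace ℝ (Fin (n + 1))) 1) ∧
    Set.InvOn (phiMap (-ξ)) (phiMap ξ)
      (Metric.sphere (0 : EuclideanSpace ℝ (Fin (n + 1))) 1)
      (Metric.sphere (0 : EuclideanSpace ℝ (Fin (n + 1))) 1) := by
  have hξ : ξ ≠ 0 := by
    intro h; rw [h, norm_zero] at h0; exact lt_irrefl 0 h0
  have hξ' : (-ξ : EuclideanSpace ℝ (Fin (n + 1))) ≠ 0 := neg_ne_zero.mpr hξ
  have h1' : ‖(-ξ : EuclideanSpace ℝ (Fin (n + 1)))‖ < 1 := by rwa [norm_neg]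
  have comp1 : ∀ p ∈ Metric.sphere (0 : EuclideanSpace ℝ (Fin (n + 1))) 1,
      phiMap (-ξ) (phiMap ξ p) = p := fun p hp =>
    (phiMap_key hξ h1 (mem_sphere_zero_iff_norm.mp hp)).2
  have comp2 : ∀ q ∈ Metric.sphere (0 : EuclideanSpace ℝ (Fin (n + 1))) 1,
      phiMap ξ (phiMap (-ξ) q) = q := by
    intro q hq
    have := (phiMap_key hξ' h1' (mem_sphere_zero_iff_norm.mp hq)).2
    rwa [neg_neg] at this
  have maps1 : Set.MapsTo (phiMap ξ) (Metric.sphere (0 : EuclideanSpace ℝ (Fin (n + 1))) 1)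
      (Metric.sphere (0 : EuclideanSpace ℝ (Fin (n + 1))) 1) := fun p hp =>
    mem_sphere_zero_iff_norm.mpr (phiMap_key hξ h1 (mem_sphere_zero_iff_norm.mp hp)).1
  have maps2 : Set.MapsTo (phiMap (-ξ)) (Metric.sphere (0 : EuclideanSpace ℝ (Fin (n + 1))) 1)
      (Metric.sphere (0 : EuclideanSpace ℝ (Fin (n + 1))) 1) := fun p hp =>
    mem_sphere_zero_iff_norm.mpr (phiMap_key hξ' h1' (mem_sphere_zero_iff_norm.mp hp)).1
  have hinv : Set.InvOn (phiMap (-ξ)) (phiMap ξ)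
      (Metric.sphere (0 : EuclideanSpace ℝ (Fin (n + 1))) 1)
      (Metric.sphere (0 : EuclideanSpace ℝ (Fin (n + 1))) 1) :=
    ⟨fun p hp => comp1 p hp, fun q hq => comp2 q hq⟩
  exact ⟨comp1, hinv.bijOn maps1 maps2, hinv⟩


end
end

section
/- Let a ∈ ℝ, b > 0 and r ∈ [0,1]. Then the Dirichlet energy of Ψ_{a,b,r} over a fundamental domain of Γ(a,b) satisfies E(Ψ_{a,b,r}) = (1/2)∫_{[0,1]×[0,b]} Σ_{i=1}^{4} |∇(Ψ_{a,b,r})_i(x,y)|² dx dy = 2π²((a²+b²)(1−r)+r)/b. -/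
open MeasureTheory Real
open scoped RealInnerProductSpace

noncomputable section

set_option maxHeartbeats 1000000 in
private lemma energy_Psi_pointwise (a b r : ℝ) (hb : 0 < b) (hr0 : 0 ≤ r) (h1r : 0 ≤ 1-r)
    (p : ℝ × ℝ) :
    ((fderiv ℝ (fun q : ℝ×ℝ => Real.sqrt r * Real.cos ((2*π/b) * q.2)) p (1,0))^2
      + (fderiv ℝ (fun q : ℝ×ℝ => Real.sqrt r * Real.cos ((2*π/b) * q.2)) p (0,1))^2)
    + ((fderiv ℝ (fun q : ℝ×ℝ => Real.sqrt r * Real.sin ((2*π/b) * q.2)) p (1,0))^2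
      + (fderiv ℝ (fun q : ℝ×ℝ => Real.sqrt r * Real.sin ((2*π/b) * q.2)) p (0,1))^2)
    + ((fderiv ℝ (fun q : ℝ×ℝ => Real.sqrt (1-r) * Real.cos ((2*π) * q.1 + (-(2*π*a/b)) * q.2)) p (1,0))^2
      + (fderiv ℝ (fun q : ℝ×ℝ => Real.sqrt (1-r) * Real.cos ((2*π) * q.1 + (-(2*π*a/b)) * q.2)) p (0,1))^2)
    + ((fderiv ℝ (fun q : ℝ×ℝ => Real.sqrt (1-r) * Real.sin ((2*π) * q.1 + (-(2*π*a/b)) * q.2)) p (1,0))^2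
      + (fderiv ℝ (fun q : ℝ×ℝ => Real.sqrt (1-r) * Real.sin ((2*π) * q.1 + (-(2*π*a/b)) * q.2)) p (0,1))^2)
    = 4 * π ^ 2 * ((a ^ 2 + b ^ 2) * (1 - r) + r) / b ^ 2 := by
  have hin : HasFDerivAt (fun q : ℝ × ℝ => (2*π/b) * q.2)
      ((2*π/b) • (ContinuousLinearMap.snd ℝ ℝ ℝ)) p :=
    (hasFDerivAt_snd (𝕜 := ℝ) (p := p)).const_mul _
  have hin2 : HasFDerivAt (fun q : ℝ × ℝ => (2*π) * q.1 + (-(2*π*a/b)) * q.2)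
      ((2*π) • (ContinuousLinearMap.fst ℝ ℝ ℝ) + (-(2*π*a/b)) • (ContinuousLinearMap.snd ℝ ℝ ℝ)) p :=
    ((hasFDerivAt_fst (𝕜 := ℝ) (p := p)).const_mul _).add
      ((hasFDerivAt_snd (𝕜 := ℝ) (p := p)).const_mul _)
  rw [(hin.cos.const_mul (Real.sqrt r)).fderiv, (hin.sin.const_mul (Real.sqrt r)).fderiv,
    (hin2.cos.const_mul (Real.sqrt (1-r))).fderiv, (hin2.sin.const_mul (Real.sqrt (1-r))).fderiv]
  simp only [ContinuousLinearMap.smul_apply, ContinuousLinearMap.add_apply,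
    ContinuousLinearMap.coe_fst', ContinuousLinearMap.coe_snd', smul_eq_mul,
    mul_zero, mul_one, add_zero, zero_add]
  have hs : Real.sin ((2*π/b) * p.2) ^ 2 + Real.cos ((2*π/b) * p.2) ^ 2 = 1 :=
    Real.sin_sq_add_cos_sq _
  have hs2 : Real.sin ((2*π) * p.1 + (-(2*π*a/b)) * p.2) ^ 2
      + Real.cos ((2*π) * p.1 + (-(2*π*a/b)) * p.2) ^ 2 = 1 := Real.sin_sq_add_cos_sq _
  have hrr : Real.sqrt r ^ 2 = r := Real.sq_sqrt hr0
  have hrr2 : Real.sqrt (1-r) ^ 2 = 1 - r := Real.sq_sqrt h1r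
  have step : ∀ s1 c1 s2 c2 R Q : ℝ, s1^2+c1^2 = 1 → s2^2+c2^2 = 1 → R^2 = r → Q^2 = 1-r →
      (R * -s1 * (2*π/b))^2 + (R * c1 * (2*π/b))^2
      + ((Q * -s2 * (2*π))^2 + (Q * -s2 * (-(2*π*a/b)))^2)
      + ((Q * c2 * (2*π))^2 + (Q * c2 * (-(2*π*a/b)))^2)
      = 4 * π ^ 2 * ((a ^ 2 + b ^ 2) * (1 - r) + r) / b ^ 2 := by
    intro s1 c1 s2 c2 R Q h1 h2 h3 h4
    field_simp
    linear_combination (4*R^2)*h1 + (4*(b^2+a^2)*Q^2)*h2 + 4*h3 + 4*(b^2+a^2)*h4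
  linarith [step _ _ _ _ _ _ hs hs2 hrr hrr2]

/-- the Dirichlet energy of `Ψ_{a,b,r}` over a fundamental domain of
`Γ(a,b)` equals `2π²((a²+b²)(1−r)+r)/b`. -/
theorem energy_Psi (a b r : ℝ) (hb : 0 < b) (hr : r ∈ Set.Icc (0 : ℝ) 1) :
    energy b (Psi a b r) = 2 * π ^ 2 * ((a ^ 2 + b ^ 2) * (1 - r) + r) / b := by
  obtain ⟨hr0, hr1⟩ := hr
  have h1r : (0:ℝ) ≤ 1 - r := by linarith
  have e0 : (fun q : ℝ × ℝ => Psi a b r q 0)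
      = fun q : ℝ × ℝ => Real.sqrt r * Real.cos ((2*π/b) * q.2) := by
    funext q
    show Real.sqrt r * Real.cos (2 * π * q.2 / b) = _
    rw [show 2 * π * q.2 / b = (2*π/b) * q.2 by ring]
  have e1 : (fun q : ℝ × ℝ => Psi a b r q 1)
      = fun q : ℝ × ℝ => Real.sqrt r * Real.sin ((2*π/b) * q.2) := by
    funext q
    show Real.sqrt r * Real.sin (2 * π * q.2 / b) = _
    rw [show 2 * π * q.2 / b = (2*π/b) * q.2 by ring]
  have e2 : (fun q : ℝ × ℝ => Psi a b r q 2)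
      = fun q : ℝ × ℝ => Real.sqrt (1-r) * Real.cos ((2*π) * q.1 + (-(2*π*a/b)) * q.2) := by
    funext q
    show Real.sqrt (1-r) * Real.cos (2 * π * (q.1 - a * q.2 / b)) = _
    rw [show 2 * π * (q.1 - a * q.2 / b) = (2*π) * q.1 + (-(2*π*a/b)) * q.2 by ring]
  have e3 : (fun q : ℝ × ℝ => Psi a b r q 3)
      = fun q : ℝ × ℝ => Real.sqrt (1-r) * Real.sin ((2*π) * q.1 + (-(2*π*a/b)) * q.2) := by
    funext q
    show Real.sqrt (1-r) * Real.sin (2 * π * (q.1 - a * q.2 / b)) = _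
    rw [show 2 * π * (q.1 - a * q.2 / b) = (2*π) * q.1 + (-(2*π*a/b)) * q.2 by ring]
  have hfun : (fun p : ℝ × ℝ => ∑ i, ((fderiv ℝ (fun q => Psi a b r q i) p (1, 0)) ^ 2
      + (fderiv ℝ (fun q => Psi a b r q i) p (0, 1)) ^ 2))
      = fun _ : ℝ × ℝ => 4 * π ^ 2 * ((a ^ 2 + b ^ 2) * (1 - r) + r) / b ^ 2 := by
    funext p
    rw [Fin.sum_univ_four, e0, e1, e2, e3]
    exact energy_Psi_pointwise a b r hb hr0 h1r p
  unfold energy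
  rw [hfun, setIntegral_const]
  unfold rect
  rw [Measure.volume_eq_prod, measureReal_def, Measure.prod_prod, Real.volume_Icc, Real.volume_Icc,
    ← ENNReal.ofReal_mul (by norm_num), smul_eq_mul,
    ENNReal.toReal_ofReal (by nlinarith)]
  have hbne : b ≠ 0 := hb.ne'
  field_simp
  ring

end
end

section
/- Let a, b be real numbers with b > 0 and t := a²+b² > 1, and set r₀ = (3t − √(t(t+8)))/(2(t−1)). Then 2/3 < r₀ < 1, and the function F(r) = 16π²(t(1−r)+r)/(3√3 · b · r · √(1−r)) on the interval (2/3, 1) attains its infimum at r₀, with minimum value F(r₀) = U(a,b). -/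
open MeasureTheory Real
open scoped RealInnerProductSpace

noncomputable section

lemma le_of_sq_le' {x y : ℝ} (hx : 0 ≤ x) (hy : 0 ≤ y) (h : x^2 ≤ y^2) : x ≤ y := by nlinarith
lemma eq_of_sq_eq' {x y : ℝ} (hx : 0 ≤ x) (hy : 0 ≤ y) (h : x^2 = y^2) : x = y := by
  rw [← Real.sqrt_sq hx, ← Real.sqrt_sq hy, h]

set_option maxHeartbeats 3000000 in
/-- with `t = a²+b² > 1` and `r₀ = (3t − √(t(t+8)))/(2(t−1))`, one has
`2/3 < r₀ < 1`, and `F(r) = 16π²(t(1−r)+r)/(3√3·b·r·√(1−r))` on `(2/3, 1)` attains its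
infimum at `r₀`, with `F(r₀) = U(a,b)`. -/
theorem min_F_at_r0 (a b : ℝ) (hb : 0 < b) (ht : 1 < a ^ 2 + b ^ 2) :
    (3 * (a ^ 2 + b ^ 2) - Real.sqrt ((a ^ 2 + b ^ 2) * ((a ^ 2 + b ^ 2) + 8)))
        / (2 * ((a ^ 2 + b ^ 2) - 1)) ∈ Set.Ioo (2 / 3 : ℝ) 1 ∧
    (∀ r ∈ Set.Ioo (2 / 3 : ℝ) 1,
      (fun r : ℝ => 16 * π ^ 2 * ((a ^ 2 + b ^ 2) * (1 - r) + r)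
          / (3 * Real.sqrt 3 * b * r * Real.sqrt (1 - r)))
        ((3 * (a ^ 2 + b ^ 2) - Real.sqrt ((a ^ 2 + b ^ 2) * ((a ^ 2 + b ^ 2) + 8)))
          / (2 * ((a ^ 2 + b ^ 2) - 1)))
      ≤ 16 * π ^ 2 * ((a ^ 2 + b ^ 2) * (1 - r) + r)
          / (3 * Real.sqrt 3 * b * r * Real.sqrt (1 - r))) ∧
    (fun r : ℝ => 16 * π ^ 2 * ((a ^ 2 + b ^ 2) * (1 - r) + r)
        / (3 * Real.sqrt 3 * b * r * Real.sqrt (1 - r)))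
      ((3 * (a ^ 2 + b ^ 2) - Real.sqrt ((a ^ 2 + b ^ 2) * ((a ^ 2 + b ^ 2) + 8)))
        / (2 * ((a ^ 2 + b ^ 2) - 1)))
      = Uab a b := by
  have hpi : (0:ℝ) < π := Real.pi_pos
  set t := a ^ 2 + b ^ 2 with htdef
  have ht1 : 1 < t := ht
  have ht0 : (0:ℝ) < t := by linarith
  set s := Real.sqrt (t * (t + 8)) with hsdef
  have hs0 : 0 ≤ s := Real.sqrt_nonneg _
  have hs2 : s ^ 2 = t * (t + 8) := Real.sq_sqrt (by positivity)
  have hslt : s < 3 * t := by nlinarith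
  have hsgt : t + 2 < s := by nlinarith
  set q := (3 * t - s) / (2 * (t - 1)) with hqdef
  clear_value t s q
  have hden : (0:ℝ) < 2 * (t - 1) := by linarith
  have hq1 : q < 1 := by rw [hqdef, div_lt_one hden]; linarith
  have hq23 : 2 / 3 < q := by
    rw [hqdef, lt_div_iff₀ hden]; nlinarith [sq_nonneg (t - 1)]
  have hq0 : 0 < q := by linarith
  have hqrel : (t - 1) * q ^ 2 - 3 * t * q + 2 * t = 0 := by
    have ht1ne : t - 1 ≠ 0 := by linarith
    rw [hqdef]; field_simp; linear_combination hs2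
  have h1q : 0 < 1 - q := by linarith
  set v := Real.sqrt (1 - q) with hvdef
  have hv0 : 0 < v := Real.sqrt_pos.mpr h1q
  have hv2 : v ^ 2 = 1 - q := Real.sq_sqrt h1q.le
  clear_value v
  have h3 : (Real.sqrt 3 : ℝ) ^ 2 = 3 := Real.sq_sqrt (by norm_num)
  have h30 : (0:ℝ) < Real.sqrt 3 := Real.sqrt_pos.mpr (by norm_num)
  have hNq : 0 < t * (1 - q) + q := by nlinarith
  refine ⟨⟨hq23, hq1⟩, ?_, ?_⟩
  · intro r hr
    obtain ⟨hr1, hr2⟩ := hr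
    simp only
    rw [← hvdef]
    set u := Real.sqrt (1 - r) with hudef
    have hru : 0 < 1 - r := by linarith
    have hu0 : 0 < u := Real.sqrt_pos.mpr hru
    have hu2 : u ^ 2 = 1 - r := Real.sq_sqrt hru.le
    clear_value u
    have hr0 : 0 < r := by linarith
    have hNr : 0 < t * (1 - r) + r := by nlinarith
    rw [div_le_div_iff₀ (by positivity) (by positivity)]
    have iden : (t * (1 - r) + r)^2 * q^2 * (1 - q) - (t * (1 - q) + q)^2 * r^2 * (1 - r)
        = (r - q)^2 * ((t * (1 - q) + q)^2 * r + t^2 * (1 - q)) := by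
      linear_combination (-q^2*r*t + q^2*r + q*r*t + q*r^2*t - q*r^2 - r^2*t) * hqrel
    have hpos : (0:ℝ) ≤ (r - q)^2 * ((t * (1 - q) + q)^2 * r + t^2 * (1 - q)) :=
      mul_nonneg (sq_nonneg _)
        (add_nonneg (mul_nonneg (sq_nonneg _) hr0.le) (mul_nonneg (sq_nonneg t) h1q.le))
    have hsq : ((t * (1 - q) + q) * (r * u))^2 ≤ ((t * (1 - r) + r) * (q * v))^2 := by
      calc ((t * (1 - q) + q) * (r * u))^2 = (t*(1-q)+q)^2*r^2*(1-r) := by rw [← hu2]; ring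
        _ ≤ (t*(1-r)+r)^2*q^2*(1-q) := by linarith
        _ = ((t*(1-r)+r)*(q*v))^2 := by rw [← hv2]; ring
    have key : (t * (1 - q) + q) * (r * u) ≤ (t * (1 - r) + r) * (q * v) :=
      le_of_sq_le' (mul_nonneg hNq.le (by positivity)) (mul_nonneg hNr.le (by positivity)) hsq
    calc 16 * π ^ 2 * (t * (1 - q) + q) * (3 * Real.sqrt 3 * b * r * u)
        = (16 * π ^ 2 * (3 * Real.sqrt 3 * b)) * ((t * (1 - q) + q) * (r * u)) := by ring
      _ ≤ (16 * π ^ 2 * (3 * Real.sqrt 3 * b)) * ((t * (1 - r) + r) * (q * v)) := by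
          apply mul_le_mul_of_nonneg_left key (by positivity)
      _ = 16 * π ^ 2 * (t * (1 - r) + r) * (3 * Real.sqrt 3 * b * q * v) := by ring
  · simp only
    rw [← hvdef]
    simp only [Uab, Sab]
    have hs' : Real.sqrt (t * (8 + t)) = s := by rw [hsdef]; congr 1; ring
    rw [show (8:ℝ) + a ^ 2 + b ^ 2 = 8 + t from by rw [htdef]; ring,
       show (2:ℝ) + a ^ 2 + b ^ 2 = 2 + t from by rw [htdef]; ring, ← htdef, hs']
    set w := Real.sqrt (2 + t + s) with hwdef
    have hw0 : 0 < w := Real.sqrt_pos.mpr (by linarith)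
    have hw2 : w ^ 2 = 2 + t + s := Real.sq_sqrt (by linarith)
    clear_value w
    have h6 : (Real.sqrt 6 : ℝ) ^ 2 = 6 := Real.sq_sqrt (by norm_num)
    have h60 : (0:ℝ) < Real.sqrt 6 := Real.sqrt_pos.mpr (by norm_num)
    have hNqe : t * (1 - q) + q = (s - t) / 2 := by
      have ht1ne : t - 1 ≠ 0 := by linarith
      rw [hqdef]; field_simp; ring
    have h1qe : 1 - q = (s - t - 2) / (2 * (t - 1)) := by
      have ht1ne : t - 1 ≠ 0 := by linarith
      rw [hqdef]; field_simp; ring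
    have hst0 : 0 < t + s := by linarith
    have h3ts : 0 < 3 * t - s := by linarith
    have hsm2 : 0 < s - t - 2 := by linarith
    have hbne : b ≠ 0 := ne_of_gt hb
    have ht1ne : t - 1 ≠ 0 := by linarith
    have h3tsne : 3 * t - s ≠ 0 := ne_of_gt h3ts
    have hsm2ne : s - t - 2 ≠ 0 := ne_of_gt hsm2
    have hstne : t + s ≠ 0 := ne_of_gt hst0
    have hpine : π ≠ 0 := ne_of_gt hpi
    apply eq_of_sq_eq' (by positivity) (by positivity)
    have e1 : (16 * π ^ 2 * (t * (1 - q) + q) / (3 * Real.sqrt 3 * b * q * v)) ^ 2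
        = 256 * π ^ 4 * (t * (1 - q) + q) ^ 2 / (27 * b ^ 2 * q ^ 2 * (1 - q)) := by
      rw [div_pow, show (3 * Real.sqrt 3 * b * q * v) ^ 2
        = 3 ^ 2 * (Real.sqrt 3) ^ 2 * b ^ 2 * q ^ 2 * v ^ 2 from by ring, h3, hv2]
      congr 1
      · ring
      · ring
    have e2 : (16 * π ^ 2 / (3 * Real.sqrt 6 * b) * (w / (t + s)) * (3 * t + s)) ^ 2
        = 256 * π ^ 4 * (2 + t + s) * (3 * t + s) ^ 2 / (54 * b ^ 2 * (t + s) ^ 2) := by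
      have h62 : (3 * Real.sqrt 6 * b) ^ 2 = 54 * b ^ 2 := by
        rw [mul_pow, mul_pow, h6]; ring
      rw [mul_pow, mul_pow, div_pow, div_pow, h62, hw2]
      field_simp
      norm_num
    rw [e1, e2, hNqe, h1qe, hqdef]
    rw [div_eq_div_iff (by simp [hbne, h3tsne, hsm2ne, ht1ne]) (by simp [hbne, hstne])]
    field_simp
    linear_combination (-1080*t^3 - 999*t^4 - 108*t^5 + 216*s^2*t + 162*s^2*t^2
      + 108*s^2*t^3 - 27*s^4) * hs2


end
end

section
/- For every (a,b) ∈ 𝓜 one has U(a,b) ≤ 8π²(a²+b²+2)/(3b). -/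
open MeasureTheory Real
open scoped RealInnerProductSpace

noncomputable section

set_option maxHeartbeats 1000000 in
/-- for every `(a,b) ∈ 𝓜`, `U(a,b) ≤ 8π²(a²+b²+2)/(3b)`. -/
theorem U_le_linear_bound (a b : ℝ) (hab : (a, b) ∈ moduli) :
    Uab a b ≤ 8 * π ^ 2 * (a ^ 2 + b ^ 2 + 2) / (3 * b) := by
  obtain ⟨ha0, ha2, hb⟩ := hab
  simp only at ha0 ha2 hb
  have ha1 : a ^ 2 ≤ 1 / 4 := by nlinarith
  have hb0 : (0:ℝ) < b := by
    have : Real.sqrt (3/4) ≤ Real.sqrt (1 - a ^ 2) := by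
      apply Real.sqrt_le_sqrt; nlinarith
    have h34 : (0:ℝ) < Real.sqrt (3/4) := Real.sqrt_pos.mpr (by norm_num)
    linarith
  have hb2 : 1 - a ^ 2 ≤ b ^ 2 := by
    have := Real.sq_sqrt (by nlinarith : (0:ℝ) ≤ 1 - a ^ 2)
    nlinarith [Real.sqrt_nonneg (1 - a ^ 2)]
  set t := a ^ 2 + b ^ 2 with ht
  have ht1 : 1 ≤ t := by nlinarith
  set s := Sab a b with hsdef
  have hs0 : 0 ≤ s := Real.sqrt_nonneg _
  have hs2 : s ^ 2 = t * (8 + t) := by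
    rw [hsdef, ht, Sab, Real.sq_sqrt (by positivity)]; ring
  have hs3 : 3 ≤ s := by
    nlinarith [hs2, hs0, ht1, sq_nonneg (t - 1)]
  set u := Real.sqrt (2 + t + s) with hudef
  have hu0 : 0 ≤ u := Real.sqrt_nonneg _
  have hu2 : u ^ 2 = 2 + t + s := Real.sq_sqrt (by nlinarith)
  set v := Real.sqrt 6 with hvdef
  have hv0 : 0 < v := Real.sqrt_pos.mpr (by norm_num)
  have hv2 : v ^ 2 = 6 := Real.sq_sqrt (by norm_num)
  -- key squared inequality
  have hsq : (2 * u * (3 * t + s)) ^ 2 ≤ (v * ((t + 2) * (t + s))) ^ 2 := by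
    have e1 : (2 * u * (3 * t + s)) ^ 2 = 4 * (2 + t + s) * (3 * t + s) ^ 2 := by
      rw [mul_pow, mul_pow, hu2]; ring
    have e2 : (v * ((t + 2) * (t + s))) ^ 2 = 6 * ((t + 2) * (t + s)) ^ 2 := by
      rw [mul_pow, hv2]
    rw [e1, e2]
    nlinarith [hs2, sq_nonneg (s - t - 2), sq_nonneg (t - 1), mul_nonneg (sub_nonneg.mpr ht1) (sub_nonneg.mpr hs3), sq_nonneg (s - 3), mul_nonneg (mul_nonneg (sub_nonneg.mpr ht1) (sub_nonneg.mpr ht1)) (sub_nonneg.mpr hs3), mul_nonneg (mul_nonneg (sub_nonneg.mpr ht1) (sub_nonneg.mpr hs3)) (sub_nonneg.mpr hs3)]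
  have key : 2 * u * (3 * t + s) ≤ v * ((t + 2) * (t + s)) := by
    have hA : 0 ≤ 2 * u * (3 * t + s) := by positivity
    have hB : 0 ≤ v * ((t + 2) * (t + s)) := by positivity
    have := Real.sqrt_le_sqrt hsq
    rwa [Real.sqrt_sq hA, Real.sqrt_sq hB] at this
  have hts : 0 < t + s := by linarith
  have e : 2 + a ^ 2 + b ^ 2 + s = 2 + t + s := by rw [ht]; ring
  have heq : Uab a b = (16 * π ^ 2 * u * (3 * t + s)) / ((3 * v * b) * (t + s)) := by
    rw [Uab, ← hsdef, e, ← hudef, ← ht, ← hvdef]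
    field_simp
  rw [heq, div_le_div_iff₀ (by positivity) (by positivity)]
  have hmul : 24 * π ^ 2 * b * (2 * u * (3 * t + s)) ≤ 24 * π ^ 2 * b * (v * ((t + 2) * (t + s))) :=
    mul_le_mul_of_nonneg_left key (by positivity)
  nlinarith [hmul]

end
end

section
/- Let (a,b), (a',b') ∈ 𝓜 with a ≤ a' and b' ≤ b. Then U(a,b) ≤ U(a',b'); moreover, if b' < b the inequality is strict. In other words, U is nondecreasing in a and strictly decreasing in b on 𝓜. -/
open MeasureTheory Real
open scoped RealInnerProductSpace

noncomputable section

private lemma modFacts {a b : ℝ} (h : (a, b) ∈ moduli) :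
    0 < b ∧ 1 ≤ a ^ 2 + b ^ 2 ∧ 0 ≤ a := by
  obtain ⟨ha0, ha2, hb⟩ := h
  have h1 : (0:ℝ) < 1 - a ^ 2 := by nlinarith
  have hb0 : 0 < b := lt_of_lt_of_le (Real.sqrt_pos.2 h1) hb
  have h2 : 1 - a ^ 2 ≤ b ^ 2 := by
    have := pow_le_pow_left₀ (Real.sqrt_nonneg (1 - a^2)) hb 2
    rwa [Real.sq_sqrt h1.le] at this
  exact ⟨hb0, by linarith, ha0⟩

private lemma cFacts {a b : ℝ} (h1 : 1 ≤ a ^ 2 + b ^ 2) :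
    ∃ c : ℝ, Sab a b = c * (a ^ 2 + b ^ 2) ∧ 1 < c ∧
      (a ^ 2 + b ^ 2) * (c ^ 2 - 1) = 8 := by
  have ht : 0 < a ^ 2 + b ^ 2 := by linarith
  have hnn : 0 ≤ (a^2+b^2) * (8 + a^2+b^2) := by nlinarith
  have hs2 : Sab a b ^ 2 = (a^2+b^2) * (8 + a^2+b^2) := Real.sq_sqrt hnn
  have hs0 : 0 ≤ Sab a b := Real.sqrt_nonneg _
  have hts : a ^ 2 + b ^ 2 < Sab a b := by
    refine lt_of_pow_lt_pow_left₀ 2 hs0 ?_; nlinarith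
  refine ⟨Sab a b / (a^2+b^2), (div_mul_cancel₀ _ ht.ne').symm, (one_lt_div ht).2 hts, ?_⟩
  field_simp
  nlinarith [hs2]

private lemma polyA {c d : ℝ} (hd : 1 ≤ d) (hdc : d ≤ c) :
    (3+c)^3*(1+d)^2*(d-1) ≤ (3+d)^3*(1+c)^2*(c-1) := by
  have hx : (0:ℝ) ≤ d - 1 := by linarith
  have he : (0:ℝ) ≤ c - d := by linarith
  have H : ∀ i j : ℕ, 0 ≤ (d-1)^i * (c-d)^j := fun i j =>
    mul_nonneg (pow_nonneg hx i) (pow_nonneg he j)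
  nlinarith [H 0 1, H 0 2, H 0 3, H 1 1, H 1 2, H 1 3, H 2 1, H 2 2, H 2 3,
    H 3 1, H 3 2, H 4 1]

private lemma polyB' {c d : ℝ} (hd : 1 ≤ d) (hdc : d ≤ c) :
    (3+d)^3*(1+c) ≤ (3+c)^3*(1+d) := by
  have hx : (0:ℝ) ≤ d - 1 := by linarith
  have he : (0:ℝ) ≤ c - d := by linarith
  have H : ∀ i j : ℕ, 0 ≤ (d-1)^i * (c-d)^j := fun i j =>
    mul_nonneg (pow_nonneg hx i) (pow_nonneg he j)
  nlinarith [H 0 1, H 0 2, H 0 3, H 1 1, H 1 2, H 1 3, H 2 1, H 2 2, H 3 1]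

private lemma polyB {c d : ℝ} (hd : 1 ≤ d) (hdc : d < c) :
    (3+d)^3*(1+c) < (3+c)^3*(1+d) := by
  have hx : (0:ℝ) ≤ d - 1 := by linarith
  have he : (0:ℝ) < c - d := by linarith
  have H : ∀ i j : ℕ, 0 ≤ (d-1)^i * (c-d)^j := fun i j =>
    mul_nonneg (pow_nonneg hx i) (pow_nonneg he.le j)
  nlinarith [H 0 2, H 0 3, H 1 1, H 1 2, H 1 3, H 2 1, H 2 2, H 3 1, he]

private lemma cmp_cd {t c u d : ℝ} (ht : 0 < t) (hu : 0 < u) (hc : 1 < c) (hd : 1 < d)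
    (h8 : t*(c^2-1) = 8) (h8' : u*(d^2-1) = 8) (htu : t ≤ u) : d ≤ c := by
  have hc2 : (0:ℝ) < c^2-1 := by nlinarith
  have h1 : u*(d^2-1) ≤ u*(c^2-1) := by
    rw [h8', ← h8]; exact mul_le_mul_of_nonneg_right htu hc2.le
  have h2 : d^2 - 1 ≤ c^2 - 1 := le_of_mul_le_mul_left h1 hu
  nlinarith [h2]

private lemma cmp_cd' {t c u d : ℝ} (ht : 0 < t) (hu : 0 < u) (hc : 1 < c) (hd : 1 < d)
    (h8 : t*(c^2-1) = 8) (h8' : u*(d^2-1) = 8) (htu : t < u) : d < c := by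
  have hc2 : (0:ℝ) < c^2-1 := by nlinarith
  have h1 : u*(d^2-1) < u*(c^2-1) := by
    rw [h8', ← h8]; exact mul_lt_mul_of_pos_right htu hc2
  have h2 : d^2 - 1 < c^2 - 1 := lt_of_mul_lt_mul_left h1 hu.le
  nlinarith [h2]

private lemma coreP {t c u d : ℝ} (ht : 0 < t) (hc : 1 < c) (hd : 1 < d)
    (h8 : t*(c^2-1) = 8) (h8' : u*(d^2-1) = 8) (htu : t ≤ u) :
    t*(3+c)^3*(1+d) ≤ u*(3+d)^3*(1+c) := by
  have hu : 0 < u := lt_of_lt_of_le ht htu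
  have hdc : d ≤ c := cmp_cd ht hu hc hd h8 h8' htu
  have hp := polyA hd.le hdc
  have hcd : 0 < (c^2-1)*(d^2-1) := by nlinarith
  have key : (t*(3+c)^3*(1+d)) * ((c^2-1)*(d^2-1))
      ≤ (u*(3+d)^3*(1+c)) * ((c^2-1)*(d^2-1)) := by
    have e1 : (t*(3+c)^3*(1+d)) * ((c^2-1)*(d^2-1)) = 8*((3+c)^3*(1+d)^2*(d-1)) := by
      linear_combination ((3+c)^3*(1+d)*(d^2-1)) * h8
    have e2 : (u*(3+d)^3*(1+c)) * ((c^2-1)*(d^2-1)) = 8*((3+d)^3*(1+c)^2*(c-1)) := by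
      linear_combination ((3+d)^3*(1+c)*(c^2-1)) * h8'
    rw [e1, e2]; linarith
  exact le_of_mul_le_mul_right key hcd

private lemma stepB {t c u d w : ℝ} (hw : 0 ≤ w) (hu : 0 < u) (hut : u ≤ t)
    (hc : 1 < c) (hd : 1 < d) (h8 : t*(c^2-1) = 8) (h8' : u*(d^2-1) = 8) :
    t*(3+c)^3*(1+d)*(u - w) ≤ u*(3+d)^3*(1+c)*(t - w) := by
  have ht : 0 < t := lt_of_lt_of_le hu hut
  have hcd : c ≤ d := cmp_cd hu ht hd hc h8' h8 hut
  have hQ := polyB' hc.le hcd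
  have hP := coreP hu hd hc h8' h8 hut
  nlinarith [mul_le_mul_of_nonneg_left hQ (mul_pos ht hu).le,
    mul_le_mul_of_nonneg_left hP hw]

private lemma stepB' {t c u d w : ℝ} (hw : 0 ≤ w) (hu : 0 < u) (hut : u < t)
    (hc : 1 < c) (hd : 1 < d) (h8 : t*(c^2-1) = 8) (h8' : u*(d^2-1) = 8) :
    t*(3+c)^3*(1+d)*(u - w) < u*(3+d)^3*(1+c)*(t - w) := by
  have ht : 0 < t := lt_trans hu hut
  have hcd : c < d := cmp_cd' hu ht hd hc h8' h8 hut
  have hQ := polyB hc.le hcd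
  have hP := coreP hu hd hc h8' h8 hut.le
  nlinarith [mul_lt_mul_of_pos_left hQ (mul_pos ht hu),
    mul_le_mul_of_nonneg_left hP hw]

private lemma Uab_sq {a b : ℝ} (hb : 0 < b) (h1 : 1 ≤ a ^ 2 + b ^ 2) :
    Uab a b ^ 2 * (b ^ 2 * ((a ^ 2 + b ^ 2) * (a ^ 2 + b ^ 2 + Sab a b))) =
      32 * π ^ 4 / 27 * (3 * (a ^ 2 + b ^ 2) + Sab a b) ^ 3 := by
  have ht : 0 < a ^ 2 + b ^ 2 := by linarith
  have hnn : 0 ≤ (a^2+b^2) * (8 + a^2+b^2) := by nlinarith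
  have hs2 : Sab a b ^ 2 = (a^2+b^2) * (8 + a^2+b^2) := Real.sq_sqrt hnn
  have hs0 : 0 ≤ Sab a b := Real.sqrt_nonneg _
  have h2 : 0 ≤ 2 + a ^ 2 + b ^ 2 + Sab a b := by linarith
  have sqA : Real.sqrt (2 + a ^ 2 + b ^ 2 + Sab a b) ^ 2 = 2 + a ^ 2 + b ^ 2 + Sab a b :=
    Real.sq_sqrt h2
  have sq6 : Real.sqrt 6 ^ 2 = 6 := Real.sq_sqrt (by norm_num)
  have h60 : Real.sqrt 6 ≠ 0 := by positivity
  have hts : 0 < a ^ 2 + b ^ 2 + Sab a b := by linarith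
  have hA : 2 + a^2 + b^2 + Sab a b
      = (3*(a^2+b^2)+Sab a b)*(a^2+b^2+Sab a b)/(4*(a^2+b^2)) := by
    rw [eq_div_iff (by positivity)]
    linear_combination -hs2
  unfold Uab
  rw [mul_pow, mul_pow, div_pow, div_pow, sqA,
    show ((3:ℝ)*Real.sqrt 6*b)^2 = 54*b^2 by rw [mul_pow, mul_pow, sq6]; ring, hA]
  field_simp
  ring

private lemma Uab_pos {a b : ℝ} (hb : 0 < b) (h1 : 1 ≤ a ^ 2 + b ^ 2) :
    0 < Uab a b := by
  have hs0 : 0 ≤ Sab a b := Real.sqrt_nonneg _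
  have hsq : 0 < Real.sqrt (2 + a ^ 2 + b ^ 2 + Sab a b) := Real.sqrt_pos.2 (by linarith)
  have h6 : 0 < 3 * Real.sqrt 6 * b := by
    have : 0 < Real.sqrt 6 := Real.sqrt_pos.2 (by norm_num)
    positivity
  exact mul_pos (mul_pos (div_pos (by positivity) h6)
    (div_pos hsq (by linarith))) (by linarith)

private lemma Usq_le {a b A B : ℝ} (hb : 0 < b) (h1 : 1 ≤ a ^ 2 + b ^ 2)
    (hB : 0 < B) (h1' : 1 ≤ A ^ 2 + B ^ 2)
    (hcore : (3*(a^2+b^2)+Sab a b)^3 * (B^2*((A^2+B^2)*(A^2+B^2+Sab A B)))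
      ≤ (3*(A^2+B^2)+Sab A B)^3 * (b^2*((a^2+b^2)*(a^2+b^2+Sab a b)))) :
    Uab a b ^ 2 ≤ Uab A B ^ 2 := by
  have hs0 : 0 ≤ Sab a b := Real.sqrt_nonneg _
  have hS0 : 0 ≤ Sab A B := Real.sqrt_nonneg _
  have hD : 0 < b^2*((a^2+b^2)*(a^2+b^2+Sab a b)) := by positivity
  have hD' : 0 < B^2*((A^2+B^2)*(A^2+B^2+Sab A B)) := by positivity
  have e1 := Uab_sq hb h1
  have e2 := Uab_sq hB h1'
  have hk : (0:ℝ) ≤ 32 * π ^ 4 / 27 := by positivity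
  have step2 : Uab a b ^ 2 * ((b^2*((a^2+b^2)*(a^2+b^2+Sab a b)))
        * (B^2*((A^2+B^2)*(A^2+B^2+Sab A B))))
      ≤ Uab A B ^ 2 * ((b^2*((a^2+b^2)*(a^2+b^2+Sab a b)))
        * (B^2*((A^2+B^2)*(A^2+B^2+Sab A B)))) := by
    calc Uab a b ^ 2 * ((b^2*((a^2+b^2)*(a^2+b^2+Sab a b)))
          * (B^2*((A^2+B^2)*(A^2+B^2+Sab A B))))
        = (Uab a b ^ 2 * (b^2*((a^2+b^2)*(a^2+b^2+Sab a b))))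
          * (B^2*((A^2+B^2)*(A^2+B^2+Sab A B))) := (mul_assoc _ _ _).symm
      _ = (32 * π ^ 4 / 27 * (3*(a^2+b^2)+Sab a b)^3)
          * (B^2*((A^2+B^2)*(A^2+B^2+Sab A B))) := by rw [e1]
      _ = 32 * π ^ 4 / 27 * ((3*(a^2+b^2)+Sab a b)^3
          * (B^2*((A^2+B^2)*(A^2+B^2+Sab A B)))) := mul_assoc _ _ _
      _ ≤ 32 * π ^ 4 / 27 * ((3*(A^2+B^2)+Sab A B)^3
          * (b^2*((a^2+b^2)*(a^2+b^2+Sab a b)))) := mul_le_mul_of_nonneg_left hcore hk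
      _ = (32 * π ^ 4 / 27 * (3*(A^2+B^2)+Sab A B)^3)
          * (b^2*((a^2+b^2)*(a^2+b^2+Sab a b))) := (mul_assoc _ _ _).symm
      _ = (Uab A B ^ 2 * (B^2*((A^2+B^2)*(A^2+B^2+Sab A B))))
          * (b^2*((a^2+b^2)*(a^2+b^2+Sab a b))) := by rw [e2]
      _ = Uab A B ^ 2 * ((b^2*((a^2+b^2)*(a^2+b^2+Sab a b)))
          * (B^2*((A^2+B^2)*(A^2+B^2+Sab A B)))) := by
            rw [mul_assoc, mul_comm (B^2*((A^2+B^2)*(A^2+B^2+Sab A B)))]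
  exact le_of_mul_le_mul_right step2 (mul_pos hD hD')

private lemma Usq_lt {a b A B : ℝ} (hb : 0 < b) (h1 : 1 ≤ a ^ 2 + b ^ 2)
    (hB : 0 < B) (h1' : 1 ≤ A ^ 2 + B ^ 2)
    (hcore : (3*(a^2+b^2)+Sab a b)^3 * (B^2*((A^2+B^2)*(A^2+B^2+Sab A B)))
      < (3*(A^2+B^2)+Sab A B)^3 * (b^2*((a^2+b^2)*(a^2+b^2+Sab a b)))) :
    Uab a b ^ 2 < Uab A B ^ 2 := by
  have hs0 : 0 ≤ Sab a b := Real.sqrt_nonneg _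
  have hS0 : 0 ≤ Sab A B := Real.sqrt_nonneg _
  have hD : 0 < b^2*((a^2+b^2)*(a^2+b^2+Sab a b)) := by positivity
  have hD' : 0 < B^2*((A^2+B^2)*(A^2+B^2+Sab A B)) := by positivity
  have e1 := Uab_sq hb h1
  have e2 := Uab_sq hB h1'
  have hk : (0:ℝ) ≤ 32 * π ^ 4 / 27 := by positivity
  have step2 : Uab a b ^ 2 * ((b^2*((a^2+b^2)*(a^2+b^2+Sab a b)))
        * (B^2*((A^2+B^2)*(A^2+B^2+Sab A B))))
      < Uab A B ^ 2 * ((b^2*((a^2+b^2)*(a^2+b^2+Sab a b)))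
        * (B^2*((A^2+B^2)*(A^2+B^2+Sab A B)))) := by
    calc Uab a b ^ 2 * ((b^2*((a^2+b^2)*(a^2+b^2+Sab a b)))
          * (B^2*((A^2+B^2)*(A^2+B^2+Sab A B))))
        = (Uab a b ^ 2 * (b^2*((a^2+b^2)*(a^2+b^2+Sab a b))))
          * (B^2*((A^2+B^2)*(A^2+B^2+Sab A B))) := (mul_assoc _ _ _).symm
      _ = (32 * π ^ 4 / 27 * (3*(a^2+b^2)+Sab a b)^3)
          * (B^2*((A^2+B^2)*(A^2+B^2+Sab A B))) := by rw [e1]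
      _ = 32 * π ^ 4 / 27 * ((3*(a^2+b^2)+Sab a b)^3
          * (B^2*((A^2+B^2)*(A^2+B^2+Sab A B)))) := mul_assoc _ _ _
      _ < 32 * π ^ 4 / 27 * ((3*(A^2+B^2)+Sab A B)^3
          * (b^2*((a^2+b^2)*(a^2+b^2+Sab a b)))) := mul_lt_mul_of_pos_left hcore (by positivity)
      _ = (32 * π ^ 4 / 27 * (3*(A^2+B^2)+Sab A B)^3)
          * (b^2*((a^2+b^2)*(a^2+b^2+Sab a b))) := (mul_assoc _ _ _).symm
      _ = (Uab A B ^ 2 * (B^2*((A^2+B^2)*(A^2+B^2+Sab A B))))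
          * (b^2*((a^2+b^2)*(a^2+b^2+Sab a b))) := by rw [e2]
      _ = Uab A B ^ 2 * ((b^2*((a^2+b^2)*(a^2+b^2+Sab a b)))
          * (B^2*((A^2+B^2)*(A^2+B^2+Sab A B)))) := by
            rw [mul_assoc, mul_comm (B^2*((A^2+B^2)*(A^2+B^2+Sab A B)))]
  exact lt_of_mul_lt_mul_right step2 (mul_pos hD hD').le


set_option maxHeartbeats 2000000 in
/-- `U` is nondecreasing in `a` and strictly decreasing in `b` on `𝓜`. -/
theorem U_monotone (a b a' b' : ℝ) (hab : (a, b) ∈ moduli) (hab' : (a', b') ∈ moduli)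
    (haa : a ≤ a') (hbb : b' ≤ b) :
    Uab a b ≤ Uab a' b' ∧ (b' < b → Uab a b < Uab a' b') := by
  obtain ⟨hb, h1, ha0⟩ := modFacts hab
  obtain ⟨hb', h1', ha0'⟩ := modFacts hab'
  have hmid : (a', b) ∈ moduli := by
    refine ⟨hab'.1, hab'.2.1, le_trans ?_ hab.2.2⟩
    apply Real.sqrt_le_sqrt
    nlinarith [hab.1]
  obtain ⟨hbm, h1m, _⟩ := modFacts hmid
  obtain ⟨c, hsc, hc1, hc8⟩ := cFacts h1
  obtain ⟨c₀, hsc₀, hc01, hc08⟩ := cFacts h1m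
  obtain ⟨c', hsc', hc1', hc8'⟩ := cFacts h1'
  have ht : 0 < a ^ 2 + b ^ 2 := by linarith
  have ht0 : 0 < a' ^ 2 + b ^ 2 := by linarith
  have ht' : 0 < a' ^ 2 + b' ^ 2 := by linarith
  have htt0 : a ^ 2 + b ^ 2 ≤ a' ^ 2 + b ^ 2 := by nlinarith
  have ht't0 : a' ^ 2 + b' ^ 2 ≤ a' ^ 2 + b ^ 2 := by nlinarith
  -- step 1: increase a at fixed b
  have hA := coreP ht hc1 hc01 hc8 hc08 htt0
  have hcore1 : (3*(a^2+b^2)+Sab a b)^3 * (b^2*((a'^2+b^2)*(a'^2+b^2+Sab a' b)))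
      ≤ (3*(a'^2+b^2)+Sab a' b)^3 * (b^2*((a^2+b^2)*(a^2+b^2+Sab a b))) := by
    calc (3*(a^2+b^2)+Sab a b)^3 * (b^2*((a'^2+b^2)*(a'^2+b^2+Sab a' b)))
        = ((a^2+b^2)*(3+c)^3*(1+c₀)) * ((a^2+b^2)^2*(a'^2+b^2)^2*b^2) := by
          rw [hsc, hsc₀]; ring
      _ ≤ ((a'^2+b^2)*(3+c₀)^3*(1+c)) * ((a^2+b^2)^2*(a'^2+b^2)^2*b^2) := by
          apply mul_le_mul_of_nonneg_right hA (by positivity)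
      _ = (3*(a'^2+b^2)+Sab a' b)^3 * (b^2*((a^2+b^2)*(a^2+b^2+Sab a b))) := by
          rw [hsc, hsc₀]; ring
  have hU1 : Uab a b ^ 2 ≤ Uab a' b ^ 2 := Usq_le hb h1 hb h1m hcore1
  -- step 2: decrease b at fixed a'
  have hB2 := stepB (sq_nonneg a') ht' ht't0 hc01 hc1' hc08 hc8'
  have hcore2 : (3*(a'^2+b^2)+Sab a' b)^3 * (b'^2*((a'^2+b'^2)*(a'^2+b'^2+Sab a' b')))
      ≤ (3*(a'^2+b'^2)+Sab a' b')^3 * (b^2*((a'^2+b^2)*(a'^2+b^2+Sab a' b))) := by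
    calc (3*(a'^2+b^2)+Sab a' b)^3 * (b'^2*((a'^2+b'^2)*(a'^2+b'^2+Sab a' b')))
        = ((a'^2+b^2)*(3+c₀)^3*(1+c')*((a'^2+b'^2) - a'^2))
            * ((a'^2+b^2)^2*(a'^2+b'^2)^2) := by rw [hsc₀, hsc']; ring
      _ ≤ ((a'^2+b'^2)*(3+c')^3*(1+c₀)*((a'^2+b^2) - a'^2))
            * ((a'^2+b^2)^2*(a'^2+b'^2)^2) := by
          apply mul_le_mul_of_nonneg_right hB2 (by positivity)
      _ = (3*(a'^2+b'^2)+Sab a' b')^3 * (b^2*((a'^2+b^2)*(a'^2+b^2+Sab a' b))) := by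
          rw [hsc₀, hsc']; ring
  have hU2 : Uab a' b ^ 2 ≤ Uab a' b' ^ 2 := Usq_le hbm h1m hb' h1' hcore2
  have p1 := Uab_pos hb h1
  have p0 := Uab_pos hbm h1m
  have p2 := Uab_pos hb' h1'
  have le1 : Uab a b ≤ Uab a' b := by
    have := Real.sqrt_le_sqrt hU1
    rwa [Real.sqrt_sq p1.le, Real.sqrt_sq p0.le] at this
  have le2 : Uab a' b ≤ Uab a' b' := by
    have := Real.sqrt_le_sqrt hU2
    rwa [Real.sqrt_sq p0.le, Real.sqrt_sq p2.le] at this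
  refine ⟨le1.trans le2, fun hlt => ?_⟩
  have ht't0' : a' ^ 2 + b' ^ 2 < a' ^ 2 + b ^ 2 := by nlinarith
  have hB2' := stepB' (sq_nonneg a') ht' ht't0' hc01 hc1' hc08 hc8'
  have hcore2' : (3*(a'^2+b^2)+Sab a' b)^3 * (b'^2*((a'^2+b'^2)*(a'^2+b'^2+Sab a' b')))
      < (3*(a'^2+b'^2)+Sab a' b')^3 * (b^2*((a'^2+b^2)*(a'^2+b^2+Sab a' b))) := by
    calc (3*(a'^2+b^2)+Sab a' b)^3 * (b'^2*((a'^2+b'^2)*(a'^2+b'^2+Sab a' b')))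
        = ((a'^2+b^2)*(3+c₀)^3*(1+c')*((a'^2+b'^2) - a'^2))
            * ((a'^2+b^2)^2*(a'^2+b'^2)^2) := by rw [hsc₀, hsc']; ring
      _ < ((a'^2+b'^2)*(3+c')^3*(1+c₀)*((a'^2+b^2) - a'^2))
            * ((a'^2+b^2)^2*(a'^2+b'^2)^2) := by
          apply mul_lt_mul_of_pos_right hB2' (by positivity)
      _ = (3*(a'^2+b'^2)+Sab a' b')^3 * (b^2*((a'^2+b^2)*(a'^2+b^2+Sab a' b))) := by
          rw [hsc₀, hsc']; ring
  have hU2' : Uab a' b ^ 2 < Uab a' b' ^ 2 := Usq_lt hbm h1m hb' h1' hcore2'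
  have lt2 : Uab a' b < Uab a' b' := by
    have := Real.sqrt_lt_sqrt (sq_nonneg _) hU2'
    rwa [Real.sqrt_sq p0.le, Real.sqrt_sq p2.le] at this
  exact lt_of_le_of_lt le1 lt2


end
end

section
/- For every (a,b) ∈ 𝓜 one has U(a,b) ≤ U(1/2, √3/2) = 16π²/√3. -/
open MeasureTheory Real
open scoped RealInnerProductSpace

noncomputable section

lemma sq_le_imp {x y : ℝ} (hx : 0 ≤ x) (hy : 0 ≤ y) (h : x ^ 2 ≤ y ^ 2) : x ≤ y := by
  nlinarith

lemma key_poly (t S : ℝ) (ht : 1 ≤ t) (hS : 0 ≤ S) (hS2 : S ^ 2 = t ^ 2 + 8 * t) :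
    (2 + t + S) * (3 * t + S) ^ 2 ≤ 18 * (t - 1 / 4) * (t + S) ^ 2 := by
  have hD : 18 * (t - 1 / 4) * (t + S) ^ 2 - (2 + t + S) * (3 * t + S) ^ 2
      = 20 * t ^ 3 + 59 * t ^ 2 - 52 * t + (20 * t ^ 2 - 29 * t) * S := by
    linear_combination (11 * t - 13 / 2 - S) * hS2
  rcases le_total 29 (20 * t) with h | h
  · nlinarith [mul_nonneg (mul_nonneg (by linarith : (0:ℝ) ≤ 20 * t - 29)
      (by linarith : (0:ℝ) ≤ t)) hS]
  · have hA : 0 ≤ 29 * t - 20 * t ^ 2 := by nlinarith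
    have hB : 0 ≤ 20 * t ^ 3 + 59 * t ^ 2 - 52 * t := by nlinarith
    have hR : 0 ≤ t ^ 2 * (t - 1) * (320 * t ^ 2 + 10160 * t - 2704) := by
      have h1 : 0 ≤ t - 1 := by linarith
      have h2 : 0 ≤ 320 * t ^ 2 + 10160 * t - 2704 := by nlinarith
      positivity
    have hsq : ((29 * t - 20 * t ^ 2) * S) ^ 2 ≤ (20 * t ^ 3 + 59 * t ^ 2 - 52 * t) ^ 2 := by
      have : ((29 * t - 20 * t ^ 2) * S) ^ 2 = (29 * t - 20 * t ^ 2) ^ 2 * (t ^ 2 + 8 * t) := by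
        rw [mul_pow, hS2]
      rw [this]; nlinarith [hR]
    have hfin : (29 * t - 20 * t ^ 2) * S ≤ 20 * t ^ 3 + 59 * t ^ 2 - 52 * t :=
      sq_le_imp (mul_nonneg hA hS) hB hsq
    nlinarith [hD, hfin]

lemma main_ineq (a b S : ℝ) (hb0 : 0 < b) (ht : 1 ≤ a ^ 2 + b ^ 2)
    (ha2 : a ^ 2 ≤ 1 / 4) (hS0 : 0 ≤ S)
    (hS2 : S ^ 2 = (a ^ 2 + b ^ 2) ^ 2 + 8 * (a ^ 2 + b ^ 2)) :
    (16 * π ^ 2 / (3 * Real.sqrt 6 * b)) *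
      (Real.sqrt (2 + a ^ 2 + b ^ 2 + S) / (a ^ 2 + b ^ 2 + S)) *
      (3 * (a ^ 2 + b ^ 2) + S) ≤ 16 * π ^ 2 / Real.sqrt 3 := by
  have hkey := key_poly (a ^ 2 + b ^ 2) S ht hS0 hS2
  have hkey2 : (2 + a ^ 2 + b ^ 2 + S) * (3 * (a ^ 2 + b ^ 2) + S) ^ 2
      ≤ 18 * b ^ 2 * ((a ^ 2 + b ^ 2) + S) ^ 2 := by
    nlinarith [mul_nonneg (show (0:ℝ) ≤ b ^ 2 - (a ^ 2 + b ^ 2 - 1 / 4) by nlinarith)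
      (sq_nonneg ((a ^ 2 + b ^ 2) + S))]
  have htS : (0:ℝ) < a ^ 2 + b ^ 2 + S := by nlinarith
  have h2p : Real.sqrt 2 ^ 2 = 2 := Real.sq_sqrt (by norm_num)
  have hQ : Real.sqrt (2 + a ^ 2 + b ^ 2 + S) * (3 * (a ^ 2 + b ^ 2) + S)
      ≤ 3 * Real.sqrt 2 * b * (a ^ 2 + b ^ 2 + S) := by
    apply sq_le_imp
    · exact mul_nonneg (Real.sqrt_nonneg _) (by nlinarith)
    · positivity
    · have hL : (Real.sqrt (2 + a ^ 2 + b ^ 2 + S) * (3 * (a ^ 2 + b ^ 2) + S)) ^ 2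
          = (2 + a ^ 2 + b ^ 2 + S) * (3 * (a ^ 2 + b ^ 2) + S) ^ 2 := by
        rw [mul_pow, Real.sq_sqrt (by nlinarith)]
      have hR : (3 * Real.sqrt 2 * b * (a ^ 2 + b ^ 2 + S)) ^ 2
          = 18 * b ^ 2 * ((a ^ 2 + b ^ 2) + S) ^ 2 := by
        rw [mul_pow, mul_pow, mul_pow, h2p]; ring
      rw [hL, hR]
      exact hkey2
  have h6 : (0:ℝ) < Real.sqrt 6 := Real.sqrt_pos.2 (by norm_num)
  have hden : (0:ℝ) < 3 * Real.sqrt 6 * b * (a ^ 2 + b ^ 2 + S) := by positivity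
  have h3p : (0:ℝ) < Real.sqrt 3 := Real.sqrt_pos.2 (by norm_num)
  have hUeq : (16 * π ^ 2 / (3 * Real.sqrt 6 * b)) *
      (Real.sqrt (2 + a ^ 2 + b ^ 2 + S) / (a ^ 2 + b ^ 2 + S)) *
      (3 * (a ^ 2 + b ^ 2) + S)
      = (16 * π ^ 2 * (Real.sqrt (2 + a ^ 2 + b ^ 2 + S) * (3 * (a ^ 2 + b ^ 2) + S)))
        / (3 * Real.sqrt 6 * b * (a ^ 2 + b ^ 2 + S)) := by
    field_simp
  rw [hUeq, div_le_div_iff₀ hden h3p]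
  have h63 : Real.sqrt 6 = Real.sqrt 2 * Real.sqrt 3 := by
    rw [show (6:ℝ) = 2 * 3 by norm_num, Real.sqrt_mul (by norm_num)]
  have hpi2 : (0:ℝ) ≤ 16 * π ^ 2 := by positivity
  calc 16 * π ^ 2 * (Real.sqrt (2 + a ^ 2 + b ^ 2 + S) * (3 * (a ^ 2 + b ^ 2) + S))
        * Real.sqrt 3
      ≤ 16 * π ^ 2 * (3 * Real.sqrt 2 * b * (a ^ 2 + b ^ 2 + S)) * Real.sqrt 3 :=
        mul_le_mul_of_nonneg_right (mul_le_mul_of_nonneg_left hQ hpi2) h3p.le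
    _ = 16 * π ^ 2 * (3 * Real.sqrt 6 * b * (a ^ 2 + b ^ 2 + S)) := by
        rw [h63]; ring

lemma Uab_equilateral : Uab (1 / 2) (Real.sqrt 3 / 2) = 16 * π ^ 2 / Real.sqrt 3 := by
  have h3 : Real.sqrt 3 ^ 2 = 3 := Real.sq_sqrt (by norm_num)
  have h34 : (Real.sqrt 3 / 2) ^ 2 = 3 / 4 := by
    rw [div_pow, h3]; norm_num
  have hS : Sab (1 / 2) (Real.sqrt 3 / 2) = 3 := by
    unfold Sab
    have harg : ((1 / 2 : ℝ) ^ 2 + (Real.sqrt 3 / 2) ^ 2) *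
        (8 + (1 / 2 : ℝ) ^ 2 + (Real.sqrt 3 / 2) ^ 2) = 9 := by
      rw [h34]; norm_num
    rw [harg, show (9:ℝ) = 3 ^ 2 by norm_num, Real.sqrt_sq (by norm_num)]
  unfold Uab
  rw [hS]
  have h1 : (2 : ℝ) + (1 / 2) ^ 2 + (Real.sqrt 3 / 2) ^ 2 + 3 = 6 := by
    rw [h34]; norm_num
  have h2 : (1 / 2 : ℝ) ^ 2 + (Real.sqrt 3 / 2) ^ 2 + 3 = 4 := by
    rw [h34]; norm_num
  have h4 : 3 * ((1 / 2 : ℝ) ^ 2 + (Real.sqrt 3 / 2) ^ 2) + 3 = 6 := by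
    rw [h34]; norm_num
  rw [h1, h2, h4]
  have h6 : (0:ℝ) < Real.sqrt 6 := Real.sqrt_pos.2 (by norm_num)
  have h3p : (0:ℝ) < Real.sqrt 3 := Real.sqrt_pos.2 (by norm_num)
  field_simp
  ring

/-- for every `(a,b) ∈ 𝓜`, `U(a,b) ≤ U(1/2, √3/2) = 16π²/√3`. -/
theorem U_le_at_equilateral :
    (∀ a b : ℝ, (a, b) ∈ moduli → Uab a b ≤ Uab (1 / 2) (Real.sqrt 3 / 2)) ∧
    Uab (1 / 2) (Real.sqrt 3 / 2) = 16 * π ^ 2 / Real.sqrt 3 := by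
  refine ⟨?_, Uab_equilateral⟩
  rintro a b ⟨ha0, ha, hb⟩
  rw [Uab_equilateral]
  simp only [] at ha0 ha hb
  have ha0' : (0:ℝ) ≤ a := ha0
  have ha' : a ≤ 1 / 2 := ha
  have h1a : (0:ℝ) < 1 - a ^ 2 := by nlinarith
  have hb0 : 0 < b := lt_of_lt_of_le (Real.sqrt_pos.2 h1a) hb
  have hb2 : 1 - a ^ 2 ≤ b ^ 2 := by
    have h := pow_le_pow_left₀ (Real.sqrt_nonneg _) hb 2
    rwa [Real.sq_sqrt h1a.le] at h
  have ht : 1 ≤ a ^ 2 + b ^ 2 := by nlinarith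
  have ha2 : a ^ 2 ≤ 1 / 4 := by nlinarith
  have hS0 : 0 ≤ Sab a b := Real.sqrt_nonneg _
  have hS2 : Sab a b ^ 2 = (a ^ 2 + b ^ 2) ^ 2 + 8 * (a ^ 2 + b ^ 2) := by
    unfold Sab
    rw [Real.sq_sqrt (by nlinarith)]; ring
  exact main_ineq a b (Sab a b) hb0 ht ha2 hS0 hS2


end
end

section
/- For every real number b ≥ 1.76 one has U(1/2, b) < 8π²/√3 + 8π. -/
open MeasureTheory Real
open scoped RealInnerProductSpace

noncomputable section

set_option maxHeartbeats 4000000 in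
lemma Ukey (b s : ℝ) (hb : (1.76:ℝ) ≤ b) (hs0 : 0 ≤ s)
    (hs2 : s^2 = ((1/2:ℝ)^2+b^2)*(8+(1/2:ℝ)^2+b^2)) :
    256*((3.1416:ℝ))^4*(2+(1/2:ℝ)^2+b^2+s)*(3*((1/2:ℝ)^2+b^2)+s)^2
      < (51967/100:ℝ)^2*b^2*((1/2:ℝ)^2+b^2+s)^2 := by
  have hu : (0:ℝ) ≤ b^2 - 30976/10000 := by nlinarith
  have hA : (34245703890178704/152587890625:ℝ)
      + (16553433991154478751/19531250000000)*b^2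
      - (576317507489308377/2441406250000)*b^4
      - (172268614361599057/1220703125000)*b^6 < 0 := by
    nlinarith [hu, pow_nonneg hu 2, pow_nonneg hu 3]
  have hC : (0:ℝ) <
      ((34245703890178704/152587890625:ℝ)
        + (16553433991154478751/19531250000000)*b^2
        - (576317507489308377/2441406250000)*b^4
        - (172268614361599057/1220703125000)*b^6)^2
      - ((22830469260119136/152587890625:ℝ)
        + (2750031450933650351/4882812500000)*b^2
        - (172268614361599057/1220703125000)*b^4)^2
        * (((1/2:ℝ)^2+b^2)*(8+(1/2:ℝ)^2+b^2)) := by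
    nlinarith [hu, pow_nonneg hu 2, pow_nonneg hu 3, pow_nonneg hu 4, pow_nonneg hu 5]
  have hC2 : ((22830469260119136/152587890625:ℝ)
        + (2750031450933650351/4882812500000)*b^2
        - (172268614361599057/1220703125000)*b^4)^2 * s^2
      < ((34245703890178704/152587890625:ℝ)
        + (16553433991154478751/19531250000000)*b^2
        - (576317507489308377/2441406250000)*b^4
        - (172268614361599057/1220703125000)*b^6)^2 := by
    rw [hs2]; linarith [hC]
  have hfin : (34245703890178704/152587890625:ℝ)
      + (16553433991154478751/19531250000000)*b^2
      - (576317507489308377/2441406250000)*b^4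
      - (172268614361599057/1220703125000)*b^6
      + ((22830469260119136/152587890625:ℝ)
        + (2750031450933650351/4882812500000)*b^2
        - (172268614361599057/1220703125000)*b^4)*s < 0 := by
    nlinarith [hA, hC2, hs0, sq_nonneg (((34245703890178704/152587890625:ℝ)
      + (16553433991154478751/19531250000000)*b^2
      - (576317507489308377/2441406250000)*b^4
      - (172268614361599057/1220703125000)*b^6)
      + ((22830469260119136/152587890625:ℝ)
        + (2750031450933650351/4882812500000)*b^2
        - (172268614361599057/1220703125000)*b^4)*s)]
  have hEq : 256*((3.1416:ℝ))^4*(2+(1/2:ℝ)^2+b^2+s)*(3*((1/2:ℝ)^2+b^2)+s)^2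
      - (51967/100:ℝ)^2*b^2*((1/2:ℝ)^2+b^2+s)^2
      = (34245703890178704/152587890625:ℝ)
      + (16553433991154478751/19531250000000)*b^2
      - (576317507489308377/2441406250000)*b^4
      - (172268614361599057/1220703125000)*b^6
      + ((22830469260119136/152587890625:ℝ)
        + (2750031450933650351/4882812500000)*b^2
        - (172268614361599057/1220703125000)*b^4)*s := by
    linear_combination (256*(3.1416:ℝ)^4*(15/4+7*b^2) - (51967/100:ℝ)^2*b^2
      + 256*(3.1416:ℝ)^4*s) * hs2
  linarith [hEq, hfin]

set_option maxHeartbeats 4000000 in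
/-- for every `b ≥ 1.76`, `U(1/2, b) < 8π²/√3 + 8π`. -/
theorem U_half_lt_conjectured (b : ℝ) (hb : (1.76 : ℝ) ≤ b) :
    Uab (1 / 2) b < 8 * π ^ 2 / Real.sqrt 3 + 8 * π := by
  have hb0 : (0:ℝ) < b := by linarith
  have hπl : (3.141592:ℝ) < π := Real.pi_gt_d6
  have hπu : π < (3.1416:ℝ) := by linarith [Real.pi_lt_d6]
  have h3p : (0:ℝ) < Real.sqrt 3 := Real.sqrt_pos.mpr (by norm_num)
  have h3 : Real.sqrt 3 < 1.7320509 := by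
    rw [Real.sqrt_lt' (by norm_num)]; norm_num
  have h6 : (2.4494897:ℝ) < Real.sqrt 6 := by
    rw [Real.lt_sqrt (by norm_num)]; norm_num
  set s := Sab (1/2) b with hsdef
  have hs0 : 0 ≤ s := Real.sqrt_nonneg _
  have hs2 : s^2 = ((1/2:ℝ)^2+b^2)*(8+(1/2:ℝ)^2+b^2) := by
    rw [hsdef, Sab]; rw [Real.sq_sqrt (by positivity)]
  have hD : (0:ℝ) < (1/2:ℝ)^2+b^2+s := by nlinarith
  have hN : (0:ℝ) < 3*((1/2:ℝ)^2+b^2)+s := by nlinarith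
  set r := Real.sqrt (2+(1/2:ℝ)^2+b^2+s) with hrdef
  have hr0 : 0 ≤ r := Real.sqrt_nonneg _
  have hr2 : r^2 = 2+(1/2:ℝ)^2+b^2+s := by
    rw [hrdef, Real.sq_sqrt (by nlinarith)]
  have h6p : (0:ℝ) < Real.sqrt 6 := by linarith
  have hU : Uab (1/2) b = 16*π^2*r*(3*((1/2:ℝ)^2+b^2)+s)
      / (3*Real.sqrt 6*b*((1/2:ℝ)^2+b^2+s)) := by
    rw [Uab, ← hsdef, ← hrdef]
    field_simp
  rw [show (1:ℝ)/2 = (1/2:ℝ) by norm_num] at *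
  rw [hU, div_lt_iff₀ (by positivity)]
  have hkey := Ukey b s hb hs0 hs2
  have e2 : (16*(3.1416:ℝ)^2*(r*(3*((1/2:ℝ)^2+b^2)+s)))^2
      = 256*((3.1416:ℝ))^4*(2+(1/2:ℝ)^2+b^2+s)*(3*((1/2:ℝ)^2+b^2)+s)^2 := by
    linear_combination (256*(3.1416:ℝ)^4*(3*((1/2:ℝ)^2+b^2)+s)^2) * hr2
  have hsq : (16*(3.1416:ℝ)^2*(r*(3*((1/2:ℝ)^2+b^2)+s)))^2
      < ((51967/100:ℝ)*(b*((1/2:ℝ)^2+b^2+s)))^2 := by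
    rw [e2]; nlinarith [hkey]
  have hmain : 16*(3.1416:ℝ)^2*(r*(3*((1/2:ℝ)^2+b^2)+s))
      < (51967/100:ℝ)*(b*((1/2:ℝ)^2+b^2+s)) := by
    have h1 : (0:ℝ) ≤ (51967/100:ℝ)*(b*((1/2:ℝ)^2+b^2+s)) := by positivity
    exact lt_of_pow_lt_pow_left₀ 2 h1 hsq
  have hX : (70.7184:ℝ) < 8*π^2/Real.sqrt 3 + 8*π := by
    have e1 : 8*(3.141592:ℝ)^2/1.7320509 < 8*π^2/Real.sqrt 3 := by
      rw [div_lt_div_iff₀ (by norm_num) h3p]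
      nlinarith [hπl, Real.pi_pos, h3, h3p]
    nlinarith [e1, hπl]
  have hq1 : (51967/100:ℝ) < (8*π^2/Real.sqrt 3 + 8*π) * (3*Real.sqrt 6) := by
    nlinarith [hX, h6, h6p]
  have hL : 16*π^2*r*(3*((1/2:ℝ)^2+b^2)+s)
      ≤ 16*(3.1416:ℝ)^2*(r*(3*((1/2:ℝ)^2+b^2)+s)) := by
    have hπ2 : π^2 ≤ (3.1416:ℝ)^2 := by nlinarith [hπu, Real.pi_pos]
    nlinarith [mul_le_mul_of_nonneg_right hπ2 (mul_nonneg hr0 hN.le)]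
  have hq2 : (51967/100:ℝ)*(b*((1/2:ℝ)^2+b^2+s))
      < (8*π^2/Real.sqrt 3 + 8*π) * (3*Real.sqrt 6*b*((1/2:ℝ)^2+b^2+s)) := by
    nlinarith [hq1, mul_pos hb0 hD]
  linarith [hL, hmain, hq2]


end
end

section
/- Let n ≥ 1, let A₁, …, A_n be real numbers with Σ_{i=1}^n A_i² = 1, and let (p_i, q_i), 1 ≤ i ≤ n, be pairs of integers. For (a,b) ∈ 𝓜 define F_{a,b} : ℝ² → ℝ^{2n} with components F_{a,b} = (A₁ f^{a,b}_{p₁q₁}, A₁ g^{a,b}_{p₁q₁}, …, A_n f^{a,b}_{p_nq_n}, A_n g^{a,b}_{p_nq_n}), where f^{a,b}_{pq}(x,y) = cos(2π(qx + ((p−qa)/b)y)) and g^{a,b}_{pq}(x,y) = sin(2π(qx + ((p−qa)/b)y)); then F_{a,b} takes values in the unit sphere S^{2n−1} ⊂ ℝ^{2n}. For every ξ in the open unit ball of ℝ^{2n} and every (a,b) ∈ 𝓜 and (a',b') ∈ 𝓜, one has E(φ_ξ ∘ F_{a,b}) · E(F_{a',b'}) = E(φ_ξ ∘ F_{a',b'})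 · E(F_{a,b}), i.e. the ratio of Dirichlet energies E(φ_ξ ∘ F_{a,b}) / E(φ_ξ ∘ F_{a',b'}) is independent of ξ. -/
open MeasureTheory Real
open scoped RealInnerProductSpace

noncomputable section

set_option maxHeartbeats 1000000

lemma phi_alg (α e β t s nw : ℝ) (hα0 : α ≠ 0) (ht : 1+t ≠ 0) (he : e ≠ 0)
    (hα2 : α^2*(1-e) = 1) (hβ : β*e = α-1) :
    ((α*(t+1))⁻¹)^2*nw
      + (((α*(t+1))⁻¹*(β*s)) + (-(((α*(t+1))^2)⁻¹)*(α*s))*(β*t+α))^2*e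
      + ((-(((α*(t+1))^2)⁻¹)*(α*s)))^2
      + 2*((α*(t+1))⁻¹)*((((α*(t+1))⁻¹*(β*s)) + (-(((α*(t+1))^2)⁻¹)*(α*s))*(β*t+α)))*s
      + 2*((-(((α*(t+1))^2)⁻¹)*(α*s)))*((((α*(t+1))⁻¹*(β*s)) + (-(((α*(t+1))^2)⁻¹)*(α*s))*(β*t+α)))*t
    = (1-e)/(1+t)^2*nw := by
  have he2 : α^2 - 1 = α^2 * e := by nlinarith
  have hane : α^2 - 1 ≠ 0 := by
    rw [he2]; exact mul_ne_zero (pow_ne_zero 2 hα0) he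
  have he' : e = (α^2-1)/α^2 := by
    rw [he2]; field_simp
  have hβ' : β = (α-1)/e := by
    rw [eq_div_iff he]; exact hβ
  rw [hβ', he']
  have ht1 : t + 1 ≠ 0 := by intro h; apply ht; linarith
  field_simp
  ring


lemma norm_expand {E : Type*} [NormedAddCommGroup E] [InnerProductSpace ℝ E]
    (w ξ p : E) (e t s : ℝ) (hpp : ⟪p, p⟫ = 1) (hee : ⟪ξ, ξ⟫ = e)
    (hpw : ⟪p, w⟫ = 0) (hpξ : ⟪p, ξ⟫ = t) (hwξ : ⟪w, ξ⟫ = s)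
    (c1 c2 c3 c4 : ℝ) :
    ‖c1 • w + c2 • ξ + c3 • (p + c4 • ξ)‖ ^ 2
      = c1^2*‖w‖^2 + (c2+c3*c4)^2*e + c3^2 + 2*c1*(c2+c3*c4)*s + 2*c3*(c2+c3*c4)*t := by
  have hwp : ⟪w, p⟫ = 0 := by rw [real_inner_comm]; exact hpw
  have hξp : ⟪ξ, p⟫ = t := by rw [real_inner_comm]; exact hpξ
  have hξw : ⟪ξ, w⟫ = s := by rw [real_inner_comm]; exact hwξ
  rw [← real_inner_self_eq_norm_sq, ← real_inner_self_eq_norm_sq]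
  simp only [inner_add_left, inner_add_right, real_inner_smul_left, real_inner_smul_right,
    hpp, hee, hpw, hwp, hpξ, hξp, hwξ, hξw]
  ring

variable {E : Type*} [NormedAddCommGroup E] [InnerProductSpace ℝ E]

lemma phiMap_deriv (ξ : E) (hξ0 : ξ ≠ 0) (hξ : ‖ξ‖ < 1) (p : E) (hp : ‖p‖ = 1) :
    ∃ D : E →L[ℝ] E, HasFDerivAt (phiMap ξ) D p ∧
      ∀ w : E, ⟪p, w⟫ = 0 →
        ‖D w‖ ^ 2 = (1 - ‖ξ‖ ^ 2) / (1 + ⟪p, ξ⟫) ^ 2 * ‖w‖ ^ 2 := by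
  set e : ℝ := ‖ξ‖ ^ 2 with he
  have he0 : 0 < e := pow_pos (norm_pos_iff.2 hξ0) 2
  have he1 : e < 1 := by
    have h2 := norm_nonneg ξ
    rw [he]; nlinarith
  set α : ℝ := (Real.sqrt (1 - e))⁻¹ with hα
  have hsqrt : Real.sqrt (1 - e) > 0 := Real.sqrt_pos.2 (by linarith)
  have hsqrt1 : Real.sqrt (1 - e) < 1 := by
    nlinarith [Real.sq_sqrt (by linarith : (0:ℝ) ≤ 1 - e), Real.sqrt_nonneg (1 - e)]
  have hα0 : 0 < α := by positivity
  have hα1 : 1 < α := (one_lt_inv₀ hsqrt).2 hsqrt1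
  have hα2 : α ^ 2 * (1 - e) = 1 := by
    rw [hα, inv_pow, Real.sq_sqrt (by linarith : (0:ℝ) ≤ 1 - e)]
    exact inv_mul_cancel₀ (by linarith)
  set β : ℝ := (α - 1) / e with hβ
  set t : ℝ := ⟪p, ξ⟫ with htd
  have ht' : |t| < 1 := by
    calc |t| ≤ ‖p‖ * ‖ξ‖ := abs_real_inner_le_norm p ξ
    _ < 1 := by rw [hp]; simpa using hξ
  have htpos : 0 < 1 + t := by have := abs_lt.1 ht'; linarith [this.1]
  have hξp : ⟪ξ, p⟫ = t := (real_inner_comm ξ p).symm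
  have hfne : α * (⟪ξ, p⟫ + 1) ≠ 0 := by
    rw [hξp]; exact (mul_pos hα0 (by linarith)).ne'
  have hphi : phiMap ξ = fun q : E => (α * (⟪ξ, q⟫ + 1))⁻¹ • (q + (β * ⟪ξ, q⟫ + α) • ξ) := by
    funext q
    simp only [phiMap, if_neg hξ0, ← he, ← hα, ← hβ, real_inner_comm q ξ]
  have hf : HasFDerivAt (fun q : E => α * (⟪ξ, q⟫ + 1)) (α • (innerSL ℝ ξ)) p :=
    (((innerSL ℝ ξ).hasFDerivAt).add_const 1).const_mul α
  have hfinv : HasFDerivAt (fun q : E => (α * (⟪ξ, q⟫ + 1))⁻¹)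
      ((-((α * (⟪ξ, p⟫ + 1)) ^ 2)⁻¹) • (α • (innerSL ℝ ξ))) p :=
    (hasDerivAt_inv hfne).comp_hasFDerivAt p hf
  have hg : HasFDerivAt (fun q : E => q + (β * ⟪ξ, q⟫ + α) • ξ)
      (ContinuousLinearMap.id ℝ E + ((β • innerSL ℝ ξ).smulRight ξ)) p :=
    (hasFDerivAt_id p).add (((((innerSL ℝ ξ).hasFDerivAt).const_mul β).add_const α).smul_const ξ)
  have hD := hfinv.smul hg
  change HasFDerivAt (fun q : E => (α * (⟪ξ, q⟫ + 1))⁻¹ • (q + (β * ⟪ξ, q⟫ + α) • ξ)) _ p at hD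
  rw [← hphi] at hD
  refine ⟨_, hD, ?_⟩
  intro w hw
  have hwp : ⟪w, p⟫ = 0 := by rw [real_inner_comm]; exact hw
  set s : ℝ := ⟪ξ, w⟫ with hsd
  have hws : ⟪w, ξ⟫ = s := (real_inner_comm w ξ).symm
  have happ : (((α * (⟪ξ, p⟫ + 1))⁻¹ •
        (ContinuousLinearMap.id ℝ E + (β • innerSL ℝ ξ).smulRight ξ) +
      ((-((α * (⟪ξ, p⟫ + 1)) ^ 2)⁻¹) • (α • (innerSL ℝ ξ))).smulRight
        (p + (β * ⟪ξ, p⟫ + α) • ξ)) : E →L[ℝ] E) w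
      = ((α * (t + 1))⁻¹) • w + ((α * (t + 1))⁻¹ * (β * s)) • ξ
        + ((-((α * (t + 1)) ^ 2)⁻¹) * (α * s)) • (p + (β * t + α) • ξ) := by
    simp [ContinuousLinearMap.add_apply, ContinuousLinearMap.smul_apply,
      ContinuousLinearMap.smulRight_apply, ContinuousLinearMap.id_apply,
      innerSL_apply_apply, hξp, hsd, smul_smul, smul_add, add_smul]
    module
  rw [happ]
  have hpp : ⟪p, p⟫ = (1:ℝ) := by
    rw [real_inner_self_eq_norm_sq, hp]; norm_num
  have hee : ⟪ξ, ξ⟫ = e := real_inner_self_eq_norm_sq ξ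
  rw [norm_expand w ξ p e t s hpp hee hw rfl hws]
  have hee2 : e = 1 - (α^2)⁻¹ := by
    field_simp
    nlinarith [hα2]
  have hene : (1 : ℝ) - (α^2)⁻¹ ≠ 0 := by rw [← hee2]; exact he0.ne'
  have hβe : β * e = α - 1 := by rw [hβ]; field_simp
  exact phi_alg α e β t s (‖w‖^2) hα0.ne' htpos.ne' he0.ne' hα2 hβe

namespace Tor
variable (n : ℕ) (A : Fin n → ℝ) (pq : Fin n → ℤ × ℤ) (a b : ℝ)

/-- the linear phase functional -/
def L (i : Fin n) : (ℝ × ℝ) →L[ℝ] ℝ :=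
  (2 * π * ((pq i).2 : ℝ)) • (ContinuousLinearMap.fst ℝ ℝ ℝ)
    + (2 * π * ((((pq i).1 : ℝ) - ((pq i).2 : ℝ) * a) / b)) • (ContinuousLinearMap.snd ℝ ℝ ℝ)

/-- the phase -/
def θ (i : Fin n) (z : ℝ × ℝ) : ℝ :=
  2 * π * (((pq i).2 : ℝ) * z.1 + ((((pq i).1 : ℝ) - ((pq i).2 : ℝ) * a) / b) * z.2)

lemma Ftorus_apply (z : ℝ × ℝ) (i : Fin n) (j : Fin 2) :
    Ftorus n A pq a b z (i, j)
      = if j = 0 then A i * Real.cos (θ n pq a b i z) else A i * Real.sin (θ n pq a b i z) := rfl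

lemma hasFDerivAt_theta (i : Fin n) (z : ℝ × ℝ) :
    HasFDerivAt (θ n pq a b i) (L n pq a b i) z := by
  have h1 : HasFDerivAt (fun z : ℝ × ℝ => z.1) (ContinuousLinearMap.fst ℝ ℝ ℝ) z :=
    hasFDerivAt_fst
  have h2 : HasFDerivAt (fun z : ℝ × ℝ => z.2) (ContinuousLinearMap.snd ℝ ℝ ℝ) z :=
    hasFDerivAt_snd
  have := ((h1.const_mul (((pq i).2 : ℝ))).add
      (h2.const_mul ((((pq i).1 : ℝ) - ((pq i).2 : ℝ) * a) / b))).const_mul (2 * π)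
  have hLeq : L n pq a b i
      = (2 * π) • ((((pq i).2 : ℝ)) • ContinuousLinearMap.fst ℝ ℝ ℝ
        + ((((pq i).1 : ℝ) - ((pq i).2 : ℝ) * a) / b) • ContinuousLinearMap.snd ℝ ℝ ℝ) := by
    refine ContinuousLinearMap.ext fun w => ?_
    simp [L]
    ring
  rw [hLeq]
  exact this

lemma hasFDerivAt_comp (z : ℝ × ℝ) (i : Fin n) (j : Fin 2) :
    HasFDerivAt (fun z => Ftorus n A pq a b z (i, j))
      ((if j = 0 then A i * (-Real.sin (θ n pq a b i z)) else A i * Real.cos (θ n pq a b i z))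
        • L n pq a b i) z := by
  have hθ := hasFDerivAt_theta n pq a b i z
  fin_cases j
  · have h := ((Real.hasDerivAt_cos (θ n pq a b i z)).comp_hasFDerivAt z hθ).const_mul (A i)
    simp only [Ftorus_apply]
    norm_num
    exact h.congr_fderiv (by module)
  · have h := ((Real.hasDerivAt_sin (θ n pq a b i z)).comp_hasFDerivAt z hθ).const_mul (A i)
    simp only [Ftorus_apply]
    norm_num
    exact h.congr_fderiv (by module)


def coef (i : Fin n) (j : Fin 2) (z : ℝ × ℝ) : ℝ :=
  if j = 0 then A i * (-Real.sin (θ n pq a b i z)) else A i * Real.cos (θ n pq a b i z)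

def Dfull (z : ℝ × ℝ) : (ℝ × ℝ) →L[ℝ] EuclideanSpace ℝ (Fin n × Fin 2) :=
  (((PiLp.continuousLinearEquiv 2 ℝ (fun _ : Fin n × Fin 2 => ℝ)).symm).toContinuousLinearMap).comp
    (ContinuousLinearMap.pi (fun j : Fin n × Fin 2 => coef n A pq a b j.1 j.2 z • L n pq a b j.1))

lemma Dfull_apply (z v : ℝ × ℝ) (i : Fin n) (j : Fin 2) :
    Dfull n A pq a b z v (i, j) = coef n A pq a b i j z * L n pq a b i v := rfl

lemma hasFDerivAt_Ftorus (z : ℝ × ℝ) :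
    HasFDerivAt (Ftorus n A pq a b) (Dfull n A pq a b z) z := by
  have hG : HasFDerivAt
      (fun (z : ℝ × ℝ) (j : Fin n × Fin 2) =>
        if j.2 = 0 then A j.1 * eigenC a b (pq j.1).1 (pq j.1).2 z.1 z.2
        else A j.1 * eigenS a b (pq j.1).1 (pq j.1).2 z.1 z.2)
      (ContinuousLinearMap.pi (fun j : Fin n × Fin 2 => coef n A pq a b j.1 j.2 z • L n pq a b j.1)) z :=
    hasFDerivAt_pi.2 (fun j => hasFDerivAt_comp n A pq a b z j.1 j.2)
  exact ((((PiLp.continuousLinearEquiv 2 ℝ (fun _ : Fin n × Fin 2 => ℝ)).symm).toContinuousLinearMap).hasFDerivAt).comp z hG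

lemma sum_sq_eq_normsq {ι : Type*} [Fintype ι] (x : EuclideanSpace ℝ ι) :
    ∑ i, (x i) ^ 2 = ‖x‖ ^ 2 := by
  rw [EuclideanSpace.norm_eq, Real.sq_sqrt (by positivity)]
  simp [Real.norm_eq_abs, sq_abs]

lemma norm_Ftorus (hA : ∑ i, (A i) ^ 2 = 1) (z : ℝ × ℝ) : ‖Ftorus n A pq a b z‖ = 1 := by
  have h : ∑ j : Fin n × Fin 2, (Ftorus n A pq a b z j) ^ 2 = 1 := by
    rw [Fintype.sum_prod_type]
    have : ∀ i : Fin n, ∑ j : Fin 2, (Ftorus n A pq a b z (i, j)) ^ 2 = (A i) ^ 2 := by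
      intro i
      rw [Fin.sum_univ_two]
      simp only [Ftorus_apply]
      norm_num
      have := Real.sin_sq_add_cos_sq (θ n pq a b i z)
      ring_nf
      nlinarith [this]
    rw [Finset.sum_congr rfl (fun i _ => this i), hA]
  have h2 := sum_sq_eq_normsq (Ftorus n A pq a b z)
  rw [h] at h2
  nlinarith [norm_nonneg (Ftorus n A pq a b z)]

lemma inner_Ftorus_Dfull (z v : ℝ × ℝ) :
    ⟪Ftorus n A pq a b z, Dfull n A pq a b z v⟫ = 0 := by
  rw [PiLp.inner_apply]
  rw [Fintype.sum_prod_type]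
  rw [Finset.sum_eq_zero]
  intro i _
  rw [Fin.sum_univ_two]
  simp only [Ftorus_apply, Dfull_apply, coef, RCLike.inner_apply, conj_trivial]
  norm_num
  ring

lemma normsq_Dfull (z v : ℝ × ℝ) :
    ‖Dfull n A pq a b z v‖ ^ 2 = ∑ i, (A i) ^ 2 * (L n pq a b i v) ^ 2 := by
  rw [← sum_sq_eq_normsq, Fintype.sum_prod_type]
  refine Finset.sum_congr rfl (fun i _ => ?_)
  rw [Fin.sum_univ_two]
  simp only [Dfull_apply, coef]
  norm_num
  have h := Real.sin_sq_add_cos_sq (θ n pq a b i z)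
  linear_combination (A i * (L n pq a b i) v) ^ 2 * h

/-- total squared frequency constant -/
def cst : ℝ := ∑ i, (A i) ^ 2 *
  ((2 * π * ((pq i).2 : ℝ)) ^ 2 + (2 * π * ((((pq i).1 : ℝ) - ((pq i).2 : ℝ) * a) / b)) ^ 2)

lemma L_apply10 (i : Fin n) : L n pq a b i (1, 0) = 2 * π * ((pq i).2 : ℝ) := by
  simp [L]

lemma L_apply01 (i : Fin n) :
    L n pq a b i (0, 1) = 2 * π * ((((pq i).1 : ℝ) - ((pq i).2 : ℝ) * a) / b) := by
  simp [L]

lemma Dfull_cst (z : ℝ × ℝ) :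
    ‖Dfull n A pq a b z (1, 0)‖ ^ 2 + ‖Dfull n A pq a b z (0, 1)‖ ^ 2 = cst n A pq a b := by
  rw [normsq_Dfull, normsq_Dfull, cst, ← Finset.sum_add_distrib]
  refine Finset.sum_congr rfl (fun i _ => ?_)
  rw [L_apply10, L_apply01]
  ring

lemma grad_const (z : ℝ × ℝ) :
    ∑ j : Fin n × Fin 2, ((fderiv ℝ (fun q => Ftorus n A pq a b q j) z (1, 0)) ^ 2
      + (fderiv ℝ (fun q => Ftorus n A pq a b q j) z (0, 1)) ^ 2) = cst n A pq a b := by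
  have hfd : ∀ j : Fin n × Fin 2, fderiv ℝ (fun q => Ftorus n A pq a b q j) z
      = (coef n A pq a b j.1 j.2 z • L n pq a b j.1) := by
    intro j
    exact (hasFDerivAt_comp n A pq a b z j.1 j.2).fderiv
  calc ∑ j : Fin n × Fin 2, ((fderiv ℝ (fun q => Ftorus n A pq a b q j) z (1, 0)) ^ 2
      + (fderiv ℝ (fun q => Ftorus n A pq a b q j) z (0, 1)) ^ 2)
      = ∑ j : Fin n × Fin 2, ((Dfull n A pq a b z (1, 0) j) ^ 2
        + (Dfull n A pq a b z (0, 1) j) ^ 2) := by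
        refine Finset.sum_congr rfl (fun j _ => ?_)
        rw [hfd j]
        rfl
    _ = ‖Dfull n A pq a b z (1, 0)‖ ^ 2 + ‖Dfull n A pq a b z (0, 1)‖ ^ 2 := by
        rw [Finset.sum_add_distrib, sum_sq_eq_normsq, sum_sq_eq_normsq]
    _ = cst n A pq a b := Dfull_cst n A pq a b z


lemma grad_phi (ξ : EuclideanSpace ℝ (Fin n × Fin 2)) (hξ0 : ξ ≠ 0) (hξ : ‖ξ‖ < 1)
    (hA : ∑ i, (A i) ^ 2 = 1) (z : ℝ × ℝ) :
    ∑ j : Fin n × Fin 2, ((fderiv ℝ (fun q => phiMap ξ (Ftorus n A pq a b q) j) z (1, 0)) ^ 2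
      + (fderiv ℝ (fun q => phiMap ξ (Ftorus n A pq a b q) j) z (0, 1)) ^ 2)
    = (1 - ‖ξ‖ ^ 2) / (1 + ⟪Ftorus n A pq a b z, ξ⟫) ^ 2 * cst n A pq a b := by
  obtain ⟨D, hD, hnorm⟩ :=
    phiMap_deriv ξ hξ0 hξ (Ftorus n A pq a b z) (norm_Ftorus n A pq a b hA z)
  have hchain := hD.comp z (hasFDerivAt_Ftorus n A pq a b z)
  have hfd : ∀ j : Fin n × Fin 2, fderiv ℝ (fun q => phiMap ξ (Ftorus n A pq a b q) j) z
      = (EuclideanSpace.proj j).comp (D.comp (Dfull n A pq a b z)) := by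
    intro j
    have h := (EuclideanSpace.proj (𝕜 := ℝ) (ι := Fin n × Fin 2) j).hasFDerivAt.comp z hchain
    exact HasFDerivAt.fderiv (by exact h)
  calc ∑ j : Fin n × Fin 2, ((fderiv ℝ (fun q => phiMap ξ (Ftorus n A pq a b q) j) z (1, 0)) ^ 2
      + (fderiv ℝ (fun q => phiMap ξ (Ftorus n A pq a b q) j) z (0, 1)) ^ 2)
      = ∑ j : Fin n × Fin 2, ((D (Dfull n A pq a b z (1, 0)) j) ^ 2
        + (D (Dfull n A pq a b z (0, 1)) j) ^ 2) := by
        refine Finset.sum_congr rfl (fun j _ => ?_)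
        rw [hfd j]; rfl
    _ = ‖D (Dfull n A pq a b z (1, 0))‖ ^ 2 + ‖D (Dfull n A pq a b z (0, 1))‖ ^ 2 := by
        rw [Finset.sum_add_distrib, sum_sq_eq_normsq, sum_sq_eq_normsq]
    _ = (1 - ‖ξ‖ ^ 2) / (1 + ⟪Ftorus n A pq a b z, ξ⟫) ^ 2
          * (‖Dfull n A pq a b z (1, 0)‖ ^ 2 + ‖Dfull n A pq a b z (0, 1)‖ ^ 2) := by
        rw [hnorm _ (inner_Ftorus_Dfull n A pq a b z (1, 0)),
          hnorm _ (inner_Ftorus_Dfull n A pq a b z (0, 1))]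
        ring
    _ = _ := by rw [Dfull_cst]

/-- vector on the sphere with prescribed phases -/
def mkvec (θv : Fin n → ℝ) : EuclideanSpace ℝ (Fin n × Fin 2) :=
  (WithLp.equiv 2 (Fin n × Fin 2 → ℝ)).symm
    (fun j => if j.2 = 0 then A j.1 * Real.cos (θv j.1) else A j.1 * Real.sin (θv j.1))

lemma Ftorus_eq_mkvec (z : ℝ × ℝ) :
    Ftorus n A pq a b z = mkvec n A (fun i => θ n pq a b i z) := rfl

lemma norm_mkvec (hA : ∑ i, (A i) ^ 2 = 1) (θv : Fin n → ℝ) : ‖mkvec n A θv‖ = 1 := by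
  have h : ∑ j : Fin n × Fin 2, (mkvec n A θv j) ^ 2 = 1 := by
    rw [Fintype.sum_prod_type]
    have h2 : ∀ i : Fin n, ∑ j : Fin 2, (mkvec n A θv (i, j)) ^ 2 = (A i) ^ 2 := by
      intro i
      rw [Fin.sum_univ_two]
      show (A i * Real.cos (θv i)) ^ 2 + (A i * Real.sin (θv i)) ^ 2 = (A i) ^ 2
      have h := Real.sin_sq_add_cos_sq (θv i)
      linear_combination (A i) ^ 2 * h
    rw [Finset.sum_congr rfl (fun i _ => h2 i), hA]
  have h2 := sum_sq_eq_normsq (mkvec n A θv)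
  rw [h] at h2
  nlinarith [norm_nonneg (mkvec n A θv)]

lemma mkvec_shift (θv : Fin n → ℝ) (m : Fin n → ℤ) :
    mkvec n A (fun i => θv i + (m i : ℝ) * (2 * π)) = mkvec n A θv := by
  unfold mkvec
  congr 1
  funext j
  rcases j with ⟨i, j⟩
  by_cases hj : j = 0 <;>
    simp [hj, Real.cos_add_int_mul_two_pi, Real.sin_add_int_mul_two_pi]

lemma inner_lt (ξ : EuclideanSpace ℝ (Fin n × Fin 2)) (hξ : ‖ξ‖ < 1)
    (hA : ∑ i, (A i) ^ 2 = 1) (θv : Fin n → ℝ) : |⟪mkvec n A θv, ξ⟫| < 1 := by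
  calc |⟪mkvec n A θv, ξ⟫| ≤ ‖mkvec n A θv‖ * ‖ξ‖ := abs_real_inner_le_norm _ _
    _ < 1 := by rw [norm_mkvec n A hA θv]; simpa using hξ

/-- the conformal density as a function of phases -/
def Gg (ξ : EuclideanSpace ℝ (Fin n × Fin 2)) (θv : Fin n → ℝ) : ℝ :=
  (1 - ‖ξ‖ ^ 2) / (1 + ⟪mkvec n A θv, ξ⟫) ^ 2

/-- the normalized inner integral -/
def W (ξ : EuclideanSpace ℝ (Fin n × Fin 2)) (u : ℝ) : ℝ :=
  ∫ x in (0:ℝ)..1, Gg n A ξ (fun i => 2 * π * (((pq i).2 : ℝ) * x + ((pq i).1 : ℝ) * u))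


lemma Gg_shift (ξ : EuclideanSpace ℝ (Fin n × Fin 2)) (θv : Fin n → ℝ) (m : Fin n → ℤ) :
    Gg n A ξ (fun i => θv i + (m i : ℝ) * (2 * π)) = Gg n A ξ θv := by
  unfold Gg
  rw [mkvec_shift]

lemma continuous_theta (i : Fin n) : Continuous (θ n pq a b i) := by
  unfold θ; fun_prop

lemma continuous_component (j : Fin n × Fin 2) :
    Continuous (fun p => Ftorus n A pq a b p j) := by
  rcases j with ⟨i, j⟩
  by_cases hj : j = 0
  · have : (fun p => Ftorus n A pq a b p (i, j)) = fun p => A i * Real.cos (θ n pq a b i p) := by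
      funext p; rw [Ftorus_apply, if_pos hj]
    rw [this]
    exact continuous_const.mul (Real.continuous_cos.comp (continuous_theta n pq a b i))
  · have : (fun p => Ftorus n A pq a b p (i, j)) = fun p => A i * Real.sin (θ n pq a b i p) := by
      funext p; rw [Ftorus_apply, if_neg hj]
    rw [this]
    exact continuous_const.mul (Real.continuous_sin.comp (continuous_theta n pq a b i))

lemma continuous_inner_F (ξ : EuclideanSpace ℝ (Fin n × Fin 2)) :
    Continuous (fun p : ℝ × ℝ => ⟪Ftorus n A pq a b p, ξ⟫) := by
  have h : (fun p : ℝ × ℝ => ⟪Ftorus n A pq a b p, ξ⟫)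
      = fun p => ∑ j : Fin n × Fin 2, (Ftorus n A pq a b p j) * ξ j := by
    funext p
    rw [PiLp.inner_apply]
    simp [RCLike.inner_apply]
    exact Finset.sum_congr rfl fun j _ => mul_comm _ _
  rw [h]
  exact continuous_finset_sum _ fun j _ => (continuous_component n A pq a b j).mul continuous_const

lemma denom_ne (ξ : EuclideanSpace ℝ (Fin n × Fin 2)) (hξ : ‖ξ‖ < 1)
    (hA : ∑ i, (A i) ^ 2 = 1) (p : ℝ × ℝ) : (1 + ⟪Ftorus n A pq a b p, ξ⟫) ≠ 0 := by
  have h := inner_lt n A ξ hξ hA (fun i => θ n pq a b i p)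
  rw [← Ftorus_eq_mkvec] at h
  have := abs_lt.1 h
  intro hc
  linarith [this.1]

lemma continuous_density (ξ : EuclideanSpace ℝ (Fin n × Fin 2)) (hξ : ‖ξ‖ < 1)
    (hA : ∑ i, (A i) ^ 2 = 1) :
    Continuous (fun p : ℝ × ℝ => (1 - ‖ξ‖ ^ 2) / (1 + ⟪Ftorus n A pq a b p, ξ⟫) ^ 2) := by
  apply continuous_const.div
  · exact ((continuous_const.add (continuous_inner_F n A pq a b ξ)).pow 2)
  · intro p
    exact pow_ne_zero 2 (denom_ne n A pq a b ξ hξ hA p)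

lemma key_integral (ξ : EuclideanSpace ℝ (Fin n × Fin 2)) (hξ : ‖ξ‖ < 1)
    (hA : ∑ i, (A i) ^ 2 = 1) (hb : 0 < b) :
    ∫ p in rect b, (1 - ‖ξ‖ ^ 2) / (1 + ⟪Ftorus n A pq a b p, ξ⟫) ^ 2
      = b * ∫ u in (0:ℝ)..1, W n A pq ξ u := by
  set f : ℝ × ℝ → ℝ := fun p => (1 - ‖ξ‖ ^ 2) / (1 + ⟪Ftorus n A pq a b p, ξ⟫) ^ 2 with hf
  have hcont := continuous_density n A pq a b ξ hξ hA
  have hcompact : IsCompact (rect b) := by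
    rw [rect]; exact isCompact_Icc.prod isCompact_Icc
  have hInt : IntegrableOn f (rect b) volume := hcont.continuousOn.integrableOn_compact hcompact
  have hiter : ∫ p in rect b, f p
      = ∫ y in Set.Icc (0:ℝ) b, ∫ x in Set.Icc (0:ℝ) 1, f (x, y) := by
    rw [rect] at hInt ⊢
    rw [show (volume : Measure (ℝ × ℝ)) = (volume : Measure ℝ).prod volume from
      Measure.volume_eq_prod ℝ ℝ, ← Measure.prod_restrict]
    refine integral_prod_symm _ ?_
    rwa [Measure.prod_restrict, ← Measure.volume_eq_prod]
  rw [hiter]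
  have hinner : ∀ y : ℝ, ∫ x in Set.Icc (0:ℝ) 1, f (x, y) = W n A pq ξ (y / b) := by
    intro y
    rw [integral_Icc_eq_integral_Ioc, ← intervalIntegral.integral_of_le zero_le_one]
    set f1 : ℝ → ℝ := fun x =>
      Gg n A ξ (fun i => 2 * π * (((pq i).2 : ℝ) * x + ((pq i).1 : ℝ) * (y / b))) with hf1
    have heq : ∀ x : ℝ, f (x, y) = f1 (x - a * y / b) := by
      intro x
      show Gg n A ξ (fun i => θ n pq a b i (x, y)) = Gg n A ξ _
      congr 1
      funext i
      rw [θ]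
      field_simp
      ring
    have hper : Function.Periodic f1 1 := by
      intro x
      rw [hf1]
      show Gg n A ξ _ = Gg n A ξ _
      have := Gg_shift n A ξ
        (fun i => 2 * π * (((pq i).2 : ℝ) * x + ((pq i).1 : ℝ) * (y / b))) (fun i => (pq i).2)
      rw [← this]
      congr 1
      funext i
      push_cast
      ring
    calc ∫ x in (0:ℝ)..1, f (x, y) = ∫ x in (0:ℝ)..1, f1 (x - a * y / b) := by
          simp only [heq]
      _ = ∫ x in (0 - a * y / b)..(1 - a * y / b), f1 x :=
          intervalIntegral.integral_comp_sub_right f1 (a * y / b)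
      _ = ∫ x in (0 - a * y / b)..((0 - a * y / b) + 1), f1 x := by
          rw [show (1:ℝ) - a * y / b = (0 - a * y / b) + 1 by ring]
      _ = ∫ x in (0:ℝ)..(0 + 1), f1 x := hper.intervalIntegral_add_eq _ _
      _ = W n A pq ξ (y / b) := by norm_num; rfl
  rw [setIntegral_congr_fun measurableSet_Icc (fun y _ => hinner y)]
  rw [integral_Icc_eq_integral_Ioc, ← intervalIntegral.integral_of_le hb.le]
  rw [intervalIntegral.integral_comp_div (fun u => W n A pq ξ u) hb.ne']
  norm_num [div_self hb.ne']


lemma volume_rect (hb : 0 ≤ b) : (volume (rect b)).toReal = b := by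
  rw [rect, Measure.volume_eq_prod ℝ ℝ, Measure.prod_prod, Real.volume_Icc, Real.volume_Icc]
  rw [show (1:ℝ) - 0 = 1 by norm_num, show b - 0 = b by ring]
  simp [ENNReal.toReal_mul, ENNReal.toReal_ofReal hb]

lemma energy_F (hb : 0 ≤ b) :
    energy b (Ftorus n A pq a b) = 1 / 2 * (cst n A pq a b * b) := by
  rw [energy]
  simp only [grad_const n A pq a b]
  rw [setIntegral_const, smul_eq_mul, measureReal_def, volume_rect b hb]
  ring

lemma energy_phiF (ξ : EuclideanSpace ℝ (Fin n × Fin 2)) (hξ0 : ξ ≠ 0) (hξ : ‖ξ‖ < 1)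
    (hA : ∑ i, (A i) ^ 2 = 1) (hb : 0 < b) :
    energy b (fun z => phiMap ξ (Ftorus n A pq a b z))
      = 1 / 2 * (cst n A pq a b * (b * ∫ u in (0:ℝ)..1, W n A pq ξ u)) := by
  rw [energy]
  simp only [grad_phi n A pq a b ξ hξ0 hξ hA]
  rw [integral_mul_const, key_integral n A pq a b ξ hξ hA hb]
  ring

end Tor

lemma moduli_pos {a b : ℝ} (hab : (a, b) ∈ moduli) : 0 < b := by
  obtain ⟨h1, h2, h3⟩ := hab
  simp only at h1 h2 h3
  have : (0:ℝ) < Real.sqrt (1 - a ^ 2) := Real.sqrt_pos.2 (by nlinarith)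
  linarith


/-- El Soufi–Ilias–Ros: `F_{a,b}` takes values in the unit sphere
`S^{2n−1}`, and the ratio of Dirichlet energies `E(φ_ξ ∘ F_{a,b}) / E(φ_ξ ∘ F_{a',b'})`
is independent of `ξ`. -/
theorem energy_ratio_conformal_invariant (n : ℕ) (hn : 1 ≤ n)
    (A : Fin n → ℝ) (hA : ∑ i, (A i) ^ 2 = 1) (pq : Fin n → ℤ × ℤ)
    (a b a' b' : ℝ) (hab : (a, b) ∈ moduli) (hab' : (a', b') ∈ moduli) :
    (∀ z : ℝ × ℝ, ‖Ftorus n A pq a b z‖ = 1) ∧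
    (∀ ξ : EuclideanSpace ℝ (Fin n × Fin 2), ‖ξ‖ < 1 →
      energy (ι := Fin n × Fin 2) b (fun z => phiMap ξ (Ftorus n A pq a b z))
          * energy (ι := Fin n × Fin 2) b' (Ftorus n A pq a' b')
        = energy (ι := Fin n × Fin 2) b' (fun z => phiMap ξ (Ftorus n A pq a' b' z))
          * energy (ι := Fin n × Fin 2) b (Ftorus n A pq a b)) := by
  have hb : 0 < b := moduli_pos hab
  have hb' : 0 < b' := moduli_pos hab'
  constructor
  · exact Tor.norm_Ftorus n A pq a b hA
  · intro ξ hξ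
    by_cases hξ0 : ξ = 0
    · subst hξ0
      simp only [phiMap, if_pos rfl]
      exact mul_comm _ _
    · rw [Tor.energy_phiF n A pq a b ξ hξ0 hξ hA hb,
        Tor.energy_phiF n A pq a' b' ξ hξ0 hξ hA hb',
        Tor.energy_F n A pq a b hb.le, Tor.energy_F n A pq a' b' hb'.le]
      ring


end
end
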